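/- arXiv:math/0506514 — 4 statements merged into one kernel-verified Lean document; each statement's English description precedes it below -/
import Mathlib

section
/- Let p be a prime and u ∈ ℝ with u ≠ 0. If for every ε > 0 and every N there exist integers q, q₀ with |q| ≥ N, |q₀| ≥ N and |q|·|qu−q₀|·|q₀|_p < ε, then liminf_{q→∞} q·|q|_p·⟨q·(1/u)⟩ = 0 (the liminf taken over positive integers q). -/
/-- `nearestIntDist z` is the distance from `z` to the nearest integer, denoted ⟨z⟩. -/
noncomputable def nearestIntDist (z : ℝ) : ℝ := ⨅ k : ℤ, |z - (k : ℝ)|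

lemma nearestIntDist_nonneg (z : ℝ) : 0 ≤ nearestIntDist z :=
  le_ciInf fun _ => abs_nonneg _

lemma nearestIntDist_le (z : ℝ) (k : ℤ) : nearestIntDist z ≤ |z - (k : ℝ)| :=
  ciInf_le ⟨0, by rintro x ⟨k, rfl⟩; exact abs_nonneg _⟩ k

lemma one_le_abs_mul_padicNorm (p : ℕ) (hp : p.Prime) (m : ℤ) (hm : m ≠ 0) :
    1 ≤ |(m : ℝ)| * (padicNorm p (m : ℚ) : ℝ) := by
  haveI : Fact p.Prime := ⟨hp⟩
  set v := padicValInt p m with hv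
  have hdvd : ((p : ℤ)) ^ v ∣ m := padicValInt_dvd m
  have h1 : ((p : ℤ)) ^ v ≤ |m| := Int.le_of_dvd (abs_pos.2 hm) (hdvd.trans (self_dvd_abs m))
  have h1' : ((p : ℝ)) ^ v ≤ |(m : ℝ)| := by exact_mod_cast h1
  have hnorm : (padicNorm p (m : ℚ)) = (p : ℚ) ^ (-(v : ℤ)) := by
    rw [padicNorm.eq_zpow_of_nonzero (by exact_mod_cast hm), padicValRat.of_int]
  have hppos : (0 : ℝ) < p := by exact_mod_cast hp.pos
  have hnorm' : (padicNorm p (m : ℚ) : ℝ) = (p : ℝ) ^ (-(v : ℤ)) := by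
    rw [hnorm]; push_cast; ring
  rw [hnorm']
  calc (1 : ℝ) = (p : ℝ) ^ v * (p : ℝ) ^ (-(v : ℤ)) := by
        rw [← zpow_natCast, ← zpow_add₀ (ne_of_gt hppos)]; simp
    _ ≤ |(m : ℝ)| * (p : ℝ) ^ (-(v : ℤ)) := by
        apply mul_le_mul_of_nonneg_right h1'
        positivity

/-- If for every `ε > 0` and every `N` there are integers `q, q₀` with `|q| ≥ N`, `|q₀| ≥ N`
and `|q|·|qu − q₀|·|q₀|_p < ε`, then `liminf_{q → ∞} q·|q|_p·⟨q·(1/u)⟩ = 0`. -/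
theorem liminf_eq_zero_of_approx (p : ℕ) (hp : p.Prime) (u : ℝ) (hu : u ≠ 0)
    (h : ∀ ε : ℝ, 0 < ε → ∀ N : ℕ, ∃ q q₀ : ℤ,
      (N : ℤ) ≤ |q| ∧ (N : ℤ) ≤ |q₀| ∧
      (|q| : ℝ) * |(q : ℝ) * u - (q₀ : ℝ)| * (padicNorm p (q₀ : ℚ) : ℝ) < ε) :
    Filter.liminf
      (fun q : ℕ => (q : ℝ) * (padicNorm p (q : ℚ) : ℝ) * nearestIntDist ((q : ℝ) * (1 / u)))
      Filter.atTop = 0 := by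
  haveI : Fact p.Prime := ⟨hp⟩
  set f : ℕ → ℝ := fun q => (q : ℝ) * (padicNorm p (q : ℚ) : ℝ) * nearestIntDist ((q : ℝ) * (1 / u)) with hf
  have hf0 : ∀ q, 0 ≤ f q := by
    intro q
    have h1 : (0:ℝ) ≤ (padicNorm p (q : ℚ) : ℝ) := by exact_mod_cast padicNorm.nonneg _
    exact mul_nonneg (mul_nonneg (by positivity) h1) (nearestIntDist_nonneg _)
  have huabs : (0:ℝ) < |u| := abs_pos.2 hu
  have hfreq : ∀ ε : ℝ, 0 < ε → ∃ᶠ n in Filter.atTop, f n < ε := by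
    intro ε hε
    rw [Filter.frequently_atTop]
    intro N
    set δ := min (ε/2) (1/2) with hδ
    have hδpos : 0 < δ := lt_min (by linarith) (by norm_num)
    have hδle : δ ≤ 1/2 := min_le_right _ _
    have hδle' : δ ≤ ε/2 := min_le_left _ _
    obtain ⟨q, q₀, hq, hq₀, hA⟩ := h δ hδpos (max N 1)
    have hmax1 : ((max N 1 : ℕ) : ℤ) ≥ 1 := by
      have := le_max_right N 1
      omega
    have hq1 : (1:ℤ) ≤ |q| := le_trans hmax1 hq
    have hq₀_1 : (1:ℤ) ≤ |q₀| := le_trans hmax1 hq₀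
    have hqne : q ≠ 0 := by intro h0; simp [h0] at hq1
    have hq₀ne : q₀ ≠ 0 := by intro h0; simp [h0] at hq₀_1
    set n := q₀.natAbs with hn
    have hnN : N ≤ n := by
      have h1 : ((max N 1 : ℕ) : ℤ) ≤ |q₀| := hq₀
      have h2 : |q₀| = (n : ℤ) := by rw [hn, Int.abs_eq_natAbs]
      have := le_max_left N 1
      omega
    refine ⟨n, hnN, ?_⟩
    set B := |(q:ℝ) * u - (q₀:ℝ)| with hB
    set P := (padicNorm p (q₀:ℚ) : ℝ) with hP
    have hBnn : 0 ≤ B := abs_nonneg _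
    have hQcast : ((|q| : ℤ) : ℝ) = |(q:ℝ)| := by push_cast; ring
    have hqR1 : (1:ℝ) ≤ |(q:ℝ)| := by exact_mod_cast hq1
    have hq₀R1 : (1:ℝ) ≤ |(q₀:ℝ)| := by exact_mod_cast hq₀_1
    have hkey : 1 ≤ |(q₀:ℝ)| * P := one_le_abs_mul_padicNorm p hp q₀ hq₀ne
    have hPpos : 0 < P := by
      have : P ≠ 0 := by
        intro h0
        rw [h0, mul_zero] at hkey; linarith
      have hPnn : 0 ≤ P := by rw [hP]; exact_mod_cast padicNorm.nonneg _
      exact lt_of_le_of_ne hPnn (Ne.symm this)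
    -- |q| * B < δ * |q₀|
    have hBbound : |(q:ℝ)| * B < δ * |(q₀:ℝ)| := by
      nlinarith [mul_le_mul_of_nonneg_left hkey (mul_nonneg (abs_nonneg (q:ℝ)) hBnn),
        mul_lt_mul_of_pos_right hA (lt_of_lt_of_le one_pos hq₀R1)]
    have hBδ : B < δ * |(q₀:ℝ)| := by nlinarith
    -- |q₀| ≤ 2 |q| |u|
    have htri : |(q₀:ℝ)| ≤ |(q:ℝ)| * |u| + B := by
      have : (q₀:ℝ) = (q:ℝ) * u - ((q:ℝ) * u - (q₀:ℝ)) := by ring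
      calc |(q₀:ℝ)| = |(q:ℝ) * u - ((q:ℝ) * u - (q₀:ℝ))| := by rw [← this]
        _ ≤ |(q:ℝ) * u| + |(q:ℝ) * u - (q₀:ℝ)| := abs_sub _ _
        _ = |(q:ℝ)| * |u| + B := by rw [abs_mul]
    have h2q : |(q₀:ℝ)| ≤ 2 * |(q:ℝ)| * |u| := by nlinarith
    -- nearest integer distance bound
    have hq₀Rabs : ((n:ℝ)) = |(q₀:ℝ)| := by
      rw [hn, Nat.cast_natAbs]; push_cast; ring
    have hdist : nearestIntDist ((n:ℝ) * (1/u)) ≤ B / |u| := by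
      rcases le_or_gt 0 q₀ with hpos | hneg
      · have hne : (n:ℝ) = (q₀:ℝ) := by
          rw [hq₀Rabs, abs_of_nonneg (by exact_mod_cast hpos)]
        refine le_trans (nearestIntDist_le _ q) (le_of_eq ?_)
        rw [hne]
        rw [show (q₀:ℝ) * (1/u) - (q:ℝ) = -(((q:ℝ)*u - (q₀:ℝ))/u) by field_simp; ring]
        rw [abs_neg, abs_div]
      · have hne : (n:ℝ) = -(q₀:ℝ) := by
          rw [hq₀Rabs, abs_of_neg (by exact_mod_cast hneg)]
        refine le_trans (nearestIntDist_le _ (-q)) (le_of_eq ?_)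
        rw [hne]
        push_cast
        rw [show -(q₀:ℝ) * (1/u) - (-(q:ℝ)) = ((q:ℝ)*u - (q₀:ℝ))/u by field_simp; ring]
        rw [abs_div]
    -- padicNorm of n equals P
    have hPn : (padicNorm p (n:ℚ) : ℝ) = P := by
      rw [hP, hn]
      congr 1
      have : ((q₀.natAbs : ℚ)) = |(q₀:ℚ)| := by rw [Nat.cast_natAbs]; push_cast; ring
      rw [this]
      rcases abs_choice (q₀:ℚ) with h1 | h1 <;> rw [h1]
      exact padicNorm.neg _
    have hdnn : 0 ≤ nearestIntDist ((n:ℝ) * (1/u)) := nearestIntDist_nonneg _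
    have hfn : f n ≤ 2 * (|(q:ℝ)| * B * P) := by
      have step1 : f n ≤ |(q₀:ℝ)| * P * (B / |u|) := by
        rw [hf]
        simp only
        rw [hPn, ← hq₀Rabs]
        exact mul_le_mul_of_nonneg_left hdist (mul_nonneg (by positivity) (le_of_lt hPpos))
      have step2 : |(q₀:ℝ)| * P * (B / |u|) ≤ (2 * |(q:ℝ)| * |u|) * P * (B / |u|) := by
        apply mul_le_mul_of_nonneg_right _ (by positivity)
        exact mul_le_mul_of_nonneg_right h2q (le_of_lt hPpos)
      have step3 : (2 * |(q:ℝ)| * |u|) * P * (B / |u|) = 2 * (|(q:ℝ)| * B * P) := by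
        field_simp
      linarith
    calc f n ≤ 2 * (|(q:ℝ)| * B * P) := hfn
      _ < 2 * δ := by linarith
      _ ≤ ε := by linarith
  have hbdd : Filter.IsBoundedUnder (· ≥ ·) Filter.atTop f :=
    Filter.isBoundedUnder_of ⟨0, fun x => hf0 x⟩
  have hcob : Filter.IsCoboundedUnder (· ≥ ·) Filter.atTop f :=
    Filter.IsCoboundedUnder.of_frequently_le ((hfreq 1 one_pos).mono fun n hn => le_of_lt hn)
  refine le_antisymm ?_ (Filter.le_liminf_of_le hcob (Filter.Eventually.of_forall hf0))
  by_contra hcon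
  push_neg at hcon
  have hL := Filter.liminf_le_of_frequently_le
    ((hfreq _ (half_pos hcon)).mono fun n hn => le_of_lt hn) hbdd
  linarith
end

section
/- Let p₁ and p₂ be two distinct prime numbers. Then for every u ∈ ℝ, liminf_{q→∞} q·|q|_{p₁}·|q|_{p₂}·⟨qu⟩ = 0 (the liminf taken over positive integers q). -/
lemma nearestIntDist_eq_round (z : ℝ) : nearestIntDist z = |z - round z| := by
  refine le_antisymm (nearestIntDist_le z (round z)) (le_ciInf fun k => ?_)
  rcases eq_or_ne k (round z) with rfl | hk
  · exact le_rfl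
  · have h1 : (1 : ℝ) ≤ |(round z : ℝ) - k| := by
      have h := Int.one_le_abs (sub_ne_zero.mpr (Ne.symm hk))
      have : ((1:ℤ):ℝ) ≤ ((|round z - k| : ℤ) : ℝ) := by exact_mod_cast h
      simpa [Int.cast_abs] using this
    have h2 : |z - round z| ≤ 1/2 := abs_sub_round z
    have h3 : |(round z : ℝ) - k| ≤ |(round z : ℝ) - z| + |z - k| := abs_sub_le _ _ _
    have h4 : |(round z : ℝ) - z| = |z - round z| := abs_sub_comm _ _
    linarith


lemma nearestIntDist_eq_norm (z : ℝ) : nearestIntDist z = ‖(z : AddCircle (1:ℝ))‖ := by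
  rw [AddCircle.norm_eq, nearestIntDist_eq_round]
  norm_num

lemma exists_small_comb {L₁ L₂ : ℝ} (h₁ : 0 < L₁) (h₂ : 0 < L₂)
    (hirr : ∀ a b : ℕ, 0 < a → (a:ℝ) * L₁ ≠ (b:ℝ) * L₂) {δ : ℝ} (hδ : 0 < δ) :
    ∃ a b : ℕ, 0 < a ∧ 0 < b ∧ (a:ℝ)*L₁ - (b:ℝ)*L₂ ≠ 0 ∧ |(a:ℝ)*L₁ - (b:ℝ)*L₂| < δ := by
  set θ : ℝ := L₁ / L₂ with hθdef
  have hθ : 0 < θ := div_pos h₁ h₂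
  obtain ⟨N, hN⟩ := exists_nat_gt (max (L₂/δ) (1/θ))
  have hN1 : L₂/δ < N := (le_max_left _ _).trans_lt hN
  have hN2 : 1/θ < N := (le_max_right _ _).trans_lt hN
  have hN0 : 0 < (N:ℝ) := lt_trans (by positivity) hN2
  have hN0' : 0 < N := by exact_mod_cast hN0
  -- pigeonhole
  have hcard : (Finset.range N).card < (Finset.range (N+1)).card := by simp
  have hmaps : ∀ i ∈ Finset.range (N+1),
      (⌊Int.fract ((i:ℝ)*θ) * N⌋₊) ∈ Finset.range N := by
    intro i _
    rw [Finset.mem_range, Nat.floor_lt (mul_nonneg (Int.fract_nonneg _) hN0.le)]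
    have := Int.fract_lt_one ((i:ℝ)*θ)
    calc Int.fract ((i:ℝ)*θ) * N < 1 * N := by
          apply mul_lt_mul_of_pos_right this hN0
      _ = N := one_mul _
  obtain ⟨i, hi, j, hj, hij, hgeq⟩ :=
    Finset.exists_ne_map_eq_of_card_lt_of_maps_to hcard hmaps
  -- wlog j < i
  wlog hlt : j < i generalizing i j
  · exact this j hj i hi hij.symm hgeq.symm (by omega)
  have hfr : |Int.fract ((i:ℝ)*θ) - Int.fract ((j:ℝ)*θ)| < 1/N := by
    set u := Int.fract ((i:ℝ)*θ) * N with hu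
    set v := Int.fract ((j:ℝ)*θ) * N with hv
    have hu0 : 0 ≤ u := mul_nonneg (Int.fract_nonneg _) hN0.le
    have hv0 : 0 ≤ v := mul_nonneg (Int.fract_nonneg _) hN0.le
    have h1 : (⌊u⌋₊ : ℝ) ≤ u := Nat.floor_le hu0
    have h2 : u < ⌊u⌋₊ + 1 := Nat.lt_floor_add_one u
    have h3 : (⌊v⌋₊ : ℝ) ≤ v := Nat.floor_le hv0
    have h4 : v < ⌊v⌋₊ + 1 := Nat.lt_floor_add_one v
    have heq : (⌊u⌋₊ : ℝ) = (⌊v⌋₊ : ℝ) := congrArg (Nat.cast : ℕ → ℝ) hgeq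
    have habs : |u - v| < 1 := by rw [abs_lt]; constructor <;> linarith
    have : |Int.fract ((i:ℝ)*θ) - Int.fract ((j:ℝ)*θ)| * N < 1 := by
      calc |Int.fract ((i:ℝ)*θ) - Int.fract ((j:ℝ)*θ)| * N
          = |(Int.fract ((i:ℝ)*θ) - Int.fract ((j:ℝ)*θ)) * N| := by
            rw [abs_mul, abs_of_pos hN0]
        _ = |u - v| := by rw [hu, hv]; ring_nf
        _ < 1 := habs
    rw [lt_div_iff₀ hN0]
    linarith [this]
  have hmono : ((j:ℝ))*θ ≤ (i:ℝ)*θ := by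
    have : (j:ℝ) ≤ i := by exact_mod_cast hlt.le
    nlinarith
  set m : ℤ := ⌊(i:ℝ)*θ⌋ - ⌊(j:ℝ)*θ⌋ with hm
  have hm0 : 0 ≤ m := sub_nonneg.mpr (Int.floor_le_floor hmono)
  set a : ℕ := i - j with ha
  have ha0 : 0 < a := by omega
  have hacast : (a:ℝ) = (i:ℝ) - j := by
    rw [ha]; exact_mod_cast Nat.cast_sub hlt.le
  have hkey : |(a:ℝ)*θ - (m:ℝ)| < 1/N := by
    have : (a:ℝ)*θ - (m:ℝ) = Int.fract ((i:ℝ)*θ) - Int.fract ((j:ℝ)*θ) := by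
      rw [hacast, Int.fract, Int.fract, hm]
      push_cast
      ring
    rw [this]; exact hfr
  set b : ℕ := m.toNat with hb
  have hbm : (b:ℝ) = (m:ℝ) := by
    rw [hb]; exact_mod_cast Int.toNat_of_nonneg hm0
  have hb0 : 0 < b := by
    rcases Nat.eq_zero_or_pos b with h0 | h
    · exfalso
      have hmz : (m:ℝ) = 0 := by rw [← hbm, h0]; norm_num
      have h1 : |(a:ℝ)*θ| < 1/N := by rw [← sub_zero ((a:ℝ)*θ), ← hmz]; exact hkey
      have h2 : θ ≤ (a:ℝ)*θ := by
        have : (1:ℝ) ≤ a := by exact_mod_cast ha0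
        nlinarith
      have h3 : 1/(N:ℝ) < θ := by
        rw [div_lt_iff₀ hθ] at hN2
        rw [div_lt_iff₀ hN0]
        nlinarith
      rw [abs_of_pos (lt_of_lt_of_le hθ h2)] at h1
      linarith
    · exact h
  refine ⟨a, b, ha0, hb0, ?_, ?_⟩
  · have := hirr a b ha0
    exact sub_ne_zero.mpr this
  · have : (a:ℝ)*L₁ - (b:ℝ)*L₂ = ((a:ℝ)*θ - (b:ℝ)) * L₂ := by
      rw [hθdef]; field_simp
    rw [this, abs_mul, abs_of_pos h₂, hbm]
    have hL : L₂ / N < δ := by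
      rw [div_lt_iff₀ hN0]
      rw [div_lt_iff₀ hδ] at hN1
      nlinarith
    calc |(a:ℝ)*θ - (m:ℝ)| * L₂ < (1/N) * L₂ := by
          apply mul_lt_mul_of_pos_right hkey h₂
      _ = L₂ / N := by ring
      _ < δ := hL


lemma exists_cover_aux {L₁ L₂ γ δ : ℝ} (h₂ : 0 < L₂) {a₀ b₀ : ℕ}
    (hγ : γ = (a₀:ℝ)*L₁ - (b₀:ℝ)*L₂) (hb₀ : 0 < b₀) (hγ0 : 0 < γ) (hγδ : γ < δ) :
    ∃ Z : ℝ, 0 < Z ∧ ∀ w : ℝ, Z ≤ w →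
      ∃ a b : ℕ, w ≤ (a:ℝ)*L₁ + (b:ℝ)*L₂ ∧ (a:ℝ)*L₁ + (b:ℝ)*L₂ ≤ w + δ := by
  have hδ : 0 < δ := hγ0.trans hγδ
  set A₁ : ℝ := (a₀:ℝ)*L₁ with hA₁
  have hA₁0 : 0 < A₁ := by
    have : 0 < (b₀:ℝ)*L₂ := by
      have : (0:ℝ) < b₀ := by exact_mod_cast hb₀
      nlinarith
    nlinarith [hγ0, hγ]
  refine ⟨A₁*((δ+A₁)/γ + 1), by positivity, fun w hw => ?_⟩
  have hw0 : 0 < w := lt_of_lt_of_le (by positivity) hw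
  set n : ℕ := ⌈(w+δ)/A₁⌉₊ with hn
  have hn1 : (w+δ)/A₁ ≤ (n:ℝ) := Nat.le_ceil _
  have hn2 : (n:ℝ) < (w+δ)/A₁ + 1 := Nat.ceil_lt_add_one (by positivity)
  have hnl : w + δ ≤ (n:ℝ)*A₁ := by
    rw [div_le_iff₀ hA₁0] at hn1; linarith
  have hnu : (n:ℝ)*A₁ < w + δ + A₁ := by
    have h := mul_lt_mul_of_pos_right hn2 hA₁0
    have h2 : (w + δ) / A₁ * A₁ = w + δ := div_mul_cancel₀ _ hA₁0.ne'
    nlinarith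
  set k : ℕ := ⌈((n:ℝ)*A₁ - (w+δ))/γ⌉₊ with hk
  have hk1 : ((n:ℝ)*A₁ - (w+δ))/γ ≤ (k:ℝ) := Nat.le_ceil _
  have hk1' : (n:ℝ)*A₁ - (w+δ) ≤ (k:ℝ)*γ := by
    rw [div_le_iff₀ hγ0] at hk1; linarith
  have hk2 : (k:ℝ) < ((n:ℝ)*A₁ - (w+δ))/γ + 1 := by
    apply Nat.ceil_lt_add_one
    apply div_nonneg _ hγ0.le
    linarith
  have hk2' : (k:ℝ)*γ < (n:ℝ)*A₁ - (w+δ) + γ := by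
    have := mul_lt_mul_of_pos_right hk2 hγ0
    rw [add_mul, div_mul_cancel₀ _ hγ0.ne', one_mul] at this
    exact this
  have hkn : k ≤ n := by
    have hkr : (k:ℝ)*γ < δ + A₁ := by linarith
    have hnr : (δ+A₁)/γ ≤ (n:ℝ) := by
      have h5 : (δ+A₁)/γ + 1 ≤ w/A₁ := by
        rw [le_div_iff₀ hA₁0]; nlinarith [hw]
      have h6 : w/A₁ ≤ (w+δ)/A₁ := by gcongr <;> linarith
      linarith [hn1]
    have : (k:ℝ) < (n:ℝ) + 1 := by
      have h1 : (k:ℝ) < (δ+A₁)/γ := by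
        rw [lt_div_iff₀ hγ0]; linarith
      linarith
    exact_mod_cast Nat.lt_succ_iff.mp (by exact_mod_cast this)
  refine ⟨(n-k)*a₀, k*b₀, ?_, ?_⟩ <;>
  · have hcast : (((n-k)*a₀ : ℕ):ℝ) = ((n:ℝ) - k)*(a₀:ℝ) := by
      push_cast [Nat.cast_sub hkn]; ring
    have hval : (((n-k)*a₀ : ℕ):ℝ)*L₁ + ((k*b₀:ℕ):ℝ)*L₂ = (n:ℝ)*A₁ - (k:ℝ)*γ := by
      rw [hcast, hγ, hA₁]; push_cast; ring
    rw [hval]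
    linarith




lemma exists_cover {L₁ L₂ : ℝ} (h₁ : 0 < L₁) (h₂ : 0 < L₂)
    (hirr : ∀ a b : ℕ, 0 < a → (a:ℝ) * L₁ ≠ (b:ℝ) * L₂) {δ : ℝ} (hδ : 0 < δ) :
    ∃ Z : ℝ, 0 < Z ∧ ∀ w : ℝ, Z ≤ w →
      ∃ a b : ℕ, w ≤ (a:ℝ)*L₁ + (b:ℝ)*L₂ ∧ (a:ℝ)*L₁ + (b:ℝ)*L₂ ≤ w + δ := by
  obtain ⟨a₀, b₀, ha₀, hb₀, hne, habs⟩ := exists_small_comb h₁ h₂ hirr hδ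
  rcases hne.lt_or_gt with hneg | hpos
  · -- a₀L₁ - b₀L₂ < 0 : swap roles
    have h' : (0:ℝ) < (b₀:ℝ)*L₂ - (a₀:ℝ)*L₁ := by linarith
    have habs' : (b₀:ℝ)*L₂ - (a₀:ℝ)*L₁ < δ := by
      rw [abs_sub_comm] at habs
      calc (b₀:ℝ)*L₂ - (a₀:ℝ)*L₁ ≤ |(b₀:ℝ)*L₂ - (a₀:ℝ)*L₁| := le_abs_self _
        _ < δ := habs
    obtain ⟨Z, hZ0, hZ⟩ := exists_cover_aux (γ := (b₀:ℝ)*L₂ - (a₀:ℝ)*L₁) h₁ rfl ha₀ h' habs'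
    refine ⟨Z, hZ0, fun w hw => ?_⟩
    obtain ⟨a, b, hl, hu⟩ := hZ w hw
    exact ⟨b, a, by linarith, by linarith⟩
  · have habs' : (a₀:ℝ)*L₁ - (b₀:ℝ)*L₂ < δ := by
      calc (a₀:ℝ)*L₁ - (b₀:ℝ)*L₂ ≤ |(a₀:ℝ)*L₁ - (b₀:ℝ)*L₂| := le_abs_self _
        _ < δ := habs
    exact exists_cover_aux h₂ rfl hb₀ hpos habs'

lemma smooth_dense {P Q : ℕ} (hP : 2 ≤ P) (hQ : 2 ≤ Q)
    (hind : ∀ a b : ℕ, P ^ a = Q ^ b → a = 0) {ρ : ℝ} (hρ : 1 < ρ) :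
    ∃ Z : ℝ, 1 ≤ Z ∧ ∀ z : ℝ, Z ≤ z → ∃ a b : ℕ,
      z ≤ ((P:ℝ))^a * (Q:ℝ)^b ∧ ((P:ℝ))^a * (Q:ℝ)^b ≤ ρ * z := by
  have hP1 : (1:ℝ) < P := by exact_mod_cast Nat.lt_of_lt_of_le one_lt_two hP
  have hQ1 : (1:ℝ) < Q := by exact_mod_cast Nat.lt_of_lt_of_le one_lt_two hQ
  have hL₁ : 0 < Real.log P := Real.log_pos hP1
  have hL₂ : 0 < Real.log Q := Real.log_pos hQ1
  have hirr : ∀ a b : ℕ, 0 < a → (a:ℝ)*Real.log P ≠ (b:ℝ)*Real.log Q := by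
    intro a b ha heq
    have h1 : Real.log ((P:ℝ)^a) = Real.log ((Q:ℝ)^b) := by
      rw [Real.log_pow, Real.log_pow]; exact_mod_cast heq
    have h2 : ((P:ℝ))^a = ((Q:ℝ))^b := by
      have hPa : (0:ℝ) < (P:ℝ)^a := by positivity
      have hQb : (0:ℝ) < (Q:ℝ)^b := by positivity
      exact Real.log_injOn_pos (Set.mem_Ioi.mpr hPa) (Set.mem_Ioi.mpr hQb) h1
    have h3 : P^a = Q^b := by exact_mod_cast h2
    exact absurd (hind a b h3) (by omega)
  have hδ : 0 < Real.log ρ := Real.log_pos hρ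
  obtain ⟨Z₀, _, hZ₀⟩ := exists_cover hL₁ hL₂ hirr hδ
  refine ⟨max 1 (Real.exp Z₀), le_max_left _ _, fun z hz => ?_⟩
  have hz1 : (1:ℝ) ≤ z := (le_max_left _ _).trans hz
  have hz0 : 0 < z := lt_of_lt_of_le one_pos hz1
  have hw : Z₀ ≤ Real.log z := by
    rw [← Real.log_exp Z₀]
    exact Real.log_le_log (Real.exp_pos _) ((le_max_right _ _).trans hz)
  obtain ⟨a, b, hl, hu⟩ := hZ₀ (Real.log z) hw
  refine ⟨a, b, ?_, ?_⟩
  · have := Real.exp_le_exp.mpr hl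
    rw [Real.exp_log hz0, Real.exp_add] at this
    calc z ≤ Real.exp ((a:ℝ)*Real.log P) * Real.exp ((b:ℝ)*Real.log Q) := by
          rw [← Real.exp_add]; rw [← Real.exp_log hz0]; exact Real.exp_le_exp.mpr hl
      _ = (P:ℝ)^a * (Q:ℝ)^b := by
          rw [← Real.log_pow, ← Real.log_pow, Real.exp_log (by positivity), Real.exp_log (by positivity)]
  · have := Real.exp_le_exp.mpr hu
    rw [Real.exp_add, Real.exp_add, Real.exp_log hz0, Real.exp_log (by positivity : (0:ℝ) < ρ)] at this
    calc (P:ℝ)^a * (Q:ℝ)^b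
        = Real.exp ((a:ℝ)*Real.log P) * Real.exp ((b:ℝ)*Real.log Q) := by
          rw [← Real.log_pow, ← Real.log_pow, Real.exp_log (by positivity), Real.exp_log (by positivity)]
      _ ≤ ρ * z := by rw [← Real.exp_add] at this ⊢; linarith [this]

namespace TwoPrimeAux

local notation "𝕋" => AddCircle (1:ℝ)


lemma coe_int_eq_zero (m : ℤ) : (((m:ℝ)) : 𝕋) = 0 := by
  rw [AddCircle.coe_eq_zero_iff]
  exact ⟨m, by simp⟩

lemma coe_sub_int (r : ℝ) (m : ℤ) : ((r - (m:ℝ) : ℝ) : 𝕋) = (r : 𝕋) := by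
  have h : ((r - (m:ℝ) : ℝ) : 𝕋) = (r : 𝕋) - (((m:ℝ)) : 𝕋) := by push_cast; rfl
  rw [h, coe_int_eq_zero, sub_zero]

lemma norm_coe_le (r : ℝ) : ‖(r : 𝕋)‖ ≤ |r| := by
  rw [← nearestIntDist_eq_norm]
  simpa using nearestIntDist_le r 0

lemma nsmul_coe (n : ℕ) (r : ℝ) : (n : ℕ) • ((r : ℝ) : 𝕋) = ((n * r : ℝ) : 𝕋) := by
  rw [← nsmul_eq_mul]
  exact ((QuotientAddGroup.mk' _).map_nsmul n r).symm

lemma exists_lift_Ico (z : 𝕋) : ∃ r : ℝ, 0 ≤ r ∧ r < 1 ∧ (r : 𝕋) = z := by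
  obtain ⟨y, rfl⟩ := Quotient.exists_rep z
  refine ⟨Int.fract y, Int.fract_nonneg y, Int.fract_lt_one y, ?_⟩
  rw [Int.fract]
  exact coe_sub_int y ⌊y⌋

lemma exists_lift_norm (z : 𝕋) : ∃ r : ℝ, (r : 𝕋) = z ∧ |r| = ‖z‖ := by
  obtain ⟨y, rfl⟩ := Quotient.exists_rep z
  refine ⟨y - round y, coe_sub_int y (round y), ?_⟩
  show |y - round y| = ‖((y:ℝ) : 𝕋)‖
  rw [AddCircle.norm_eq]
  norm_num

lemma stretch_hit_pos {P Q : ℕ} (hP : 2 ≤ P) (hQ : 2 ≤ Q)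
    (hind : ∀ a b : ℕ, P ^ a = Q ^ b → a = 0) (γ : 𝕋) {ε : ℝ} (hε : 0 < ε) :
    ∃ δ : ℝ, 0 < δ ∧ ∀ w : ℝ, 0 < w → w < δ →
      ∃ a b : ℕ, ‖((P^a * Q^b : ℕ) • ((w:ℝ) : 𝕋)) - γ‖ < ε := by
  have hρ : (1:ℝ) < 1 + ε/4 := by linarith
  obtain ⟨Z, hZ1, hZ⟩ := smooth_dense hP hQ hind hρ
  obtain ⟨g, hg0, hg1, hgz⟩ := exists_lift_Ico γ
  refine ⟨1/Z, by positivity, fun w hw0 hwδ => ?_⟩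
  have hZ0 : 0 < Z := lt_of_lt_of_le one_pos hZ1
  have hscale : Z ≤ (1+g)/w := by
    rw [le_div_iff₀ hw0]
    have h1 : Z * w < Z * (1/Z) := mul_lt_mul_of_pos_left hwδ hZ0
    rw [mul_one_div, div_self hZ0.ne'] at h1
    linarith
  obtain ⟨a, b, hl, hu⟩ := hZ ((1+g)/w) hscale
  set t : ℝ := (P:ℝ)^a * (Q:ℝ)^b with ht
  have htl : 1 + g ≤ t * w := by
    rw [div_le_iff₀ hw0] at hl; linarith
  have htu : t * w ≤ (1 + ε/4) * (1+g) := by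
    have hdd : (1+g)/w * w = 1+g := div_mul_cancel₀ _ hw0.ne'
    have h3 := mul_le_mul_of_nonneg_right hu hw0.le
    nlinarith [hdd, h3]
  refine ⟨a, b, ?_⟩
  have hcast : ((P^a * Q^b : ℕ) : ℝ) = t := by push_cast; rfl
  rw [nsmul_coe, ← hgz]
  have hsub : ((((P^a*Q^b : ℕ)) * w : ℝ) : 𝕋) - ((g:ℝ) : 𝕋) = (((((P^a*Q^b : ℕ)) * w - g : ℝ)) : 𝕋) := by
    push_cast; rfl
  rw [hsub]
  have heq : (((((P^a*Q^b : ℕ)) * w - g : ℝ)) : 𝕋) = (((t*w - g - 1 : ℝ)) : 𝕋) := by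
    rw [hcast]
    have h2 := coe_sub_int (t*w - g) 1
    rw [Int.cast_one] at h2
    rw [← h2]
  rw [heq]
  calc ‖(((t*w - g - 1 : ℝ)) : 𝕋)‖ ≤ |t*w - g - 1| := norm_coe_le _
    _ < ε := by
      rw [abs_lt]
      constructor
      · linarith
      · nlinarith




lemma stretch_hit {P Q : ℕ} (hP : 2 ≤ P) (hQ : 2 ≤ Q)
    (hind : ∀ a b : ℕ, P ^ a = Q ^ b → a = 0) (γ : 𝕋) {ε : ℝ} (hε : 0 < ε) :
    ∃ δ : ℝ, 0 < δ ∧ ∀ v : 𝕋, v ≠ 0 → ‖v‖ < δ →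
      ∃ a b : ℕ, ‖((P^a * Q^b : ℕ) • v) - γ‖ < ε := by
  obtain ⟨δ₁, hδ₁, h1⟩ := stretch_hit_pos hP hQ hind γ hε
  obtain ⟨δ₂, hδ₂, h2⟩ := stretch_hit_pos hP hQ hind (-γ) hε
  refine ⟨min δ₁ δ₂, lt_min hδ₁ hδ₂, fun v hv hvn => ?_⟩
  obtain ⟨w, hwv, hwn⟩ := exists_lift_norm v
  have hw0 : w ≠ 0 := by
    rintro rfl
    apply hv
    rw [← hwv]
    norm_num
  rcases hw0.lt_or_gt with hneg | hpos
  · have habs : |(-w)| = ‖v‖ := by rw [abs_neg]; exact hwn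
    have hlt : -w < δ₂ := by
      have : |(-w)| < min δ₁ δ₂ := habs ▸ hvn
      have := lt_of_abs_lt this
      exact lt_of_lt_of_le this (min_le_right _ _)
    obtain ⟨a, b, hab⟩ := h2 (-w) (by linarith) hlt
    refine ⟨a, b, ?_⟩
    have e1 : (((-w : ℝ)) : 𝕋) = -v := by
      rw [← hwv]; push_cast; rfl
    rw [e1] at hab
    have e2 : (P^a*Q^b : ℕ) • (-v) - (-γ) = -((P^a*Q^b : ℕ) • v - γ) := by
      rw [smul_neg]; abel
    rw [e2, norm_neg] at hab
    exact hab
  · have hlt : w < δ₁ := by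
      have h3 : |w| < min δ₁ δ₂ := hwn ▸ hvn
      exact lt_of_lt_of_le (lt_of_abs_lt h3) (min_le_left _ _)
    obtain ⟨a, b, hab⟩ := h1 w hpos hlt
    rw [hwv] at hab
    exact ⟨a, b, hab⟩

lemma pair_close {B : Set 𝕋} (hB : B.Infinite) {δ : ℝ} (hδ : 0 < δ) :
    ∃ v : 𝕋, v ≠ 0 ∧ ‖v‖ < δ ∧ ∃ y ∈ B, ∃ z ∈ B, y - z = v := by
  obtain ⟨N, hN⟩ := exists_nat_gt (1/δ)
  have hN0 : (0:ℝ) < N := lt_trans (by positivity) hN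
  have hmaps : Set.MapsTo (fun z : 𝕋 => ⌊(Classical.choose (exists_lift_Ico z)) * N⌋₊)
      B (Set.Iio N) := by
    intro z _
    obtain ⟨h0, h1, _⟩ := Classical.choose_spec (exists_lift_Ico z)
    simp only [Set.mem_Iio]
    rw [Nat.floor_lt (by positivity)]
    nlinarith
  obtain ⟨y, hy, z, hz, hyz, heq⟩ :=
    hB.exists_ne_map_eq_of_mapsTo hmaps (Set.finite_Iio N)
  obtain ⟨hy0, hy1, hyl⟩ := Classical.choose_spec (exists_lift_Ico y)
  obtain ⟨hz0, hz1, hzl⟩ := Classical.choose_spec (exists_lift_Ico z)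
  set ry := Classical.choose (exists_lift_Ico y) with hry
  set rz := Classical.choose (exists_lift_Ico z) with hrz
  refine ⟨y - z, sub_ne_zero.mpr hyz, ?_, y, hy, z, hz, rfl⟩
  have hcell : (⌊ry * N⌋₊ : ℝ) = (⌊rz * N⌋₊ : ℝ) := by
    exact_mod_cast congrArg (Nat.cast : ℕ → ℝ) heq
  have h1 : (⌊ry * N⌋₊ : ℝ) ≤ ry * N := Nat.floor_le (by positivity)
  have h2 : ry * N < ⌊ry * N⌋₊ + 1 := Nat.lt_floor_add_one _
  have h3 : (⌊rz * N⌋₊ : ℝ) ≤ rz * N := Nat.floor_le (by positivity)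
  have h4 : rz * N < ⌊rz * N⌋₊ + 1 := Nat.lt_floor_add_one _
  have habs : |ry - rz| < 1/N := by
    rw [abs_lt]
    constructor
    · rw [neg_lt, ← sub_lt_iff_lt_add'] at *
      rw [lt_div_iff₀ hN0] at *
      nlinarith
    · rw [lt_div_iff₀ hN0]
      nlinarith
  have hsub : y - z = (((ry - rz : ℝ)) : 𝕋) := by
    rw [← hyl, ← hzl]; push_cast; rfl
  rw [hsub]
  calc ‖(((ry - rz : ℝ)) : 𝕋)‖ ≤ |ry - rz| := norm_coe_le _
    _ < 1/N := habs
    _ < δ := by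
      rw [div_lt_iff₀ hN0]
      rw [div_lt_iff₀ hδ] at hN
      nlinarith

lemma stretch_pair {P Q : ℕ} (hP : 2 ≤ P) (hQ : 2 ≤ Q)
    (hind : ∀ a b : ℕ, P ^ a = Q ^ b → a = 0) {B : Set 𝕋}
    (hBc : IsClosed B) (hBinf : B.Infinite)
    (hBinv : ∀ (a b : ℕ), ∀ z ∈ B, (P^a*Q^b : ℕ) • z ∈ B) (γ : 𝕋) :
    ∃ z ∈ B, z + γ ∈ B := by
  haveI : Fact ((0:ℝ) < 1) := ⟨one_pos⟩
  have H : ∀ m : ℕ, ∃ u : 𝕋, u ∈ B ∧ ∃ e : 𝕋, ‖e‖ < 1/(m+1) ∧ u + γ + e ∈ B := by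
    intro m
    have hεm : (0:ℝ) < 1/(m+1) := by positivity
    obtain ⟨δ, hδ0, hδ⟩ := stretch_hit hP hQ hind γ hεm
    obtain ⟨v, hv0, hvn, y, hy, z, hz, hyz⟩ := pair_close hBinf hδ0
    obtain ⟨a, b, hab⟩ := hδ v hv0 hvn
    refine ⟨(P^a*Q^b : ℕ) • z, hBinv a b z hz, (P^a*Q^b : ℕ) • v - γ, hab, ?_⟩
    have e1 : (P^a*Q^b : ℕ) • z + γ + ((P^a*Q^b : ℕ) • v - γ) = (P^a*Q^b : ℕ) • y := by
      rw [← hyz, smul_sub]; abel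
    rw [e1]
    exact hBinv a b y hy
  choose u hu e he hmem using H
  obtain ⟨zs, hzs, φ, hφ, hconv⟩ := (hBc.isCompact).tendsto_subseq hu
  have he0 : Filter.Tendsto (fun m => e (φ m)) Filter.atTop (nhds 0) := by
    rw [tendsto_zero_iff_norm_tendsto_zero]
    have hb : ∀ m : ℕ, ‖e (φ m)‖ ≤ 1/((m:ℝ)+1) := by
      intro m
      have hmono : (m:ℝ) + 1 ≤ (φ m : ℝ) + 1 := by
        have h2 : m ≤ φ m := hφ.le_apply
        have : (m:ℝ) ≤ (φ m : ℝ) := by exact_mod_cast h2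
        linarith
      have h1 : (0:ℝ) < (m:ℝ)+1 := by positivity
      exact (he (φ m)).le.trans (one_div_le_one_div_of_le h1 hmono)
    exact squeeze_zero (fun m => norm_nonneg _) hb tendsto_one_div_add_atTop_nhds_zero_nat
  have hconv2 : Filter.Tendsto (fun m => u (φ m) + γ + e (φ m)) Filter.atTop
      (nhds (zs + γ)) := by
    have h5 := (hconv.add (tendsto_const_nhds (x := γ))).add he0
    simp only [add_zero] at h5
    exact h5
  refine ⟨zs, hzs, hBc.mem_of_tendsto hconv2 (Filter.Eventually.of_forall fun m => hmem (φ m))⟩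




lemma prime_pow_mult_indep {p₁ p₂ : ℕ} (hp₁ : p₁.Prime) (hp₂ : p₂.Prime) (hne : p₁ ≠ p₂)
    {t₁ t₂ : ℕ} (ht₁ : 0 < t₁) :
    ∀ a b : ℕ, (p₁^t₁) ^ a = (p₂^t₂) ^ b → a = 0 := by
  intro a b h
  by_contra ha
  have h1 : p₁ ∣ (p₁^t₁)^a := by
    apply dvd_pow (dvd_pow_self _ ht₁.ne') ha
  rw [h, ← pow_mul] at h1
  have h2 : p₁ ∣ p₂ := hp₁.dvd_of_dvd_pow h1
  exact hne ((Nat.prime_dvd_prime_iff_eq hp₁ hp₂).mp h2)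

lemma torsion_lift {z : 𝕋} {F : ℕ} (hF : 0 < F) (hz : F • z = 0) :
    ∃ m : ℤ, z = ((((m:ℝ)/(F:ℝ)) : ℝ) : 𝕋) := by
  obtain ⟨r, rfl⟩ := Quotient.exists_rep z
  have h1 : (((F * r : ℝ)) : 𝕋) = 0 := by
    rw [← nsmul_coe]; exact hz
  rw [AddCircle.coe_eq_zero_iff] at h1
  obtain ⟨m, hm⟩ := h1
  refine ⟨m, ?_⟩
  have hF0 : (F:ℝ) ≠ 0 := by positivity
  have : (m:ℝ)/(F:ℝ) = r := by
    rw [div_eq_iff hF0]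
    rw [zsmul_eq_mul, mul_one] at hm
    linarith [hm]
  rw [this]

lemma tau_fixes {τ F : ℕ} (hτ : 1 ≤ τ) (hdvd : F ∣ τ - 1) (hF : 0 < F) (m : ℤ) :
    (τ : ℕ) • ((((m:ℝ)/(F:ℝ)) : ℝ) : 𝕋) = ((((m:ℝ)/(F:ℝ)) : ℝ) : 𝕋) := by
  obtain ⟨c, hc⟩ := hdvd
  rw [nsmul_coe]
  have hF0 : (F:ℝ) ≠ 0 := by positivity
  have hτc : (τ : ℝ) = 1 + (F:ℝ)*(c:ℝ) := by
    have : (τ - 1 : ℕ) = F * c := hc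
    have h2 : ((τ - 1 : ℕ) : ℝ) = (F:ℝ)*(c:ℝ) := by exact_mod_cast this
    have h3 : ((τ - 1 : ℕ) : ℝ) = (τ:ℝ) - 1 := by
      have := Nat.cast_sub hτ (R := ℝ)
      simpa using this
    rw [h3] at h2
    linarith
  have key : (τ:ℝ) * ((m:ℝ)/(F:ℝ)) = (m:ℝ)/(F:ℝ) + ((c*m : ℤ):ℝ) := by
    rw [hτc]
    push_cast
    field_simp
  rw [key]
  have := coe_sub_int ((m:ℝ)/(F:ℝ) + ((c*m : ℤ):ℝ)) (c*m)
  simpa using this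

set_option maxHeartbeats 1000000 in
theorem orbit_inf_zero {p₁ p₂ : ℕ} (hp₁ : p₁.Prime) (hp₂ : p₂.Prime) (hne : p₁ ≠ p₂)
    {x : ℝ} (hx : Irrational x) {ε : ℝ} (hε : 0 < ε) :
    ∃ a b : ℕ, ‖((p₁^a * p₂^b : ℕ)) • ((x : ℝ) : 𝕋)‖ < ε := by
  by_contra hcon
  push_neg at hcon
  haveI : Fact ((0:ℝ) < 1) := ⟨one_pos⟩
  set X : 𝕋 := ((x : ℝ) : 𝕋) with hX
  set orb : Set 𝕋 := {z | ∃ a b : ℕ, (p₁^a * p₂^b : ℕ) • X = z} with horb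
  set A : Set 𝕋 := closure orb with hA
  have hp₁2 : 2 ≤ p₁ := hp₁.two_le
  have hp₂2 : 2 ≤ p₂ := hp₂.two_le
  have horb_norm : ∀ z ∈ orb, ε ≤ ‖z‖ := by
    rintro z ⟨a, b, rfl⟩; exact hcon a b
  have hA_norm : ∀ z ∈ A, ε ≤ ‖z‖ := by
    intro z hz
    have hcl : IsClosed {w : 𝕋 | ε ≤ ‖w‖} :=
      isClosed_le continuous_const continuous_norm
    exact closure_minimal horb_norm hcl hz
  have horb_inv : ∀ (a b : ℕ), ∀ z ∈ orb, (p₁^a*p₂^b : ℕ) • z ∈ orb := by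
    rintro a b z ⟨a', b', rfl⟩
    refine ⟨a + a', b + b', ?_⟩
    rw [smul_smul]
    congr 1
    rw [pow_add, pow_add]
    ring
  have hA_inv : ∀ (a b : ℕ), ∀ z ∈ A, (p₁^a*p₂^b : ℕ) • z ∈ A := by
    intro a b z hz
    have hcont : Continuous (fun w : 𝕋 => (p₁^a*p₂^b : ℕ) • w) := continuous_nsmul _
    have h1 : (fun w : 𝕋 => (p₁^a*p₂^b : ℕ) • w) '' (closure orb) ⊆
        closure ((fun w : 𝕋 => (p₁^a*p₂^b : ℕ) • w) '' orb) :=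
      image_closure_subset_closure_image hcont
    have h2 : (fun w : 𝕋 => (p₁^a*p₂^b : ℕ) • w) '' orb ⊆ orb := by
      rintro w ⟨z', hz', rfl⟩
      exact horb_inv a b z' hz'
    have h3 := h1 (Set.mem_image_of_mem _ hz)
    exact closure_mono h2 h3
  have hXn : ∀ n : ℕ, 0 < n → n • X ≠ 0 := by
    intro n hn h0
    rw [hX, nsmul_coe, AddCircle.coe_eq_zero_iff] at h0
    obtain ⟨m, hm⟩ := h0
    rw [zsmul_eq_mul, mul_one] at hm
    apply hx
    refine ⟨(m : ℚ)/(n : ℚ), ?_⟩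
    have hn0 : (n:ℝ) ≠ 0 := by positivity
    push_cast
    rw [div_eq_iff hn0]
    linarith [hm]
  -- no torsion in A
  have hA_notorsion : ∀ z ∈ A, ∀ n : ℕ, 0 < n → n • z ≠ 0 := by
    intro z hz n hn hzero
    set v₁ : ℕ := n.factorization p₁ with hv₁
    set n₁ : ℕ := n / p₁ ^ v₁ with hn₁
    set v₂ : ℕ := n₁.factorization p₂ with hv₂
    set F : ℕ := n₁ / p₂ ^ v₂ with hF
    have hn₁pos : 0 < n₁ := Nat.ordCompl_pos p₁ hn.ne'
    have hFpos : 0 < F := Nat.ordCompl_pos p₂ hn₁pos.ne'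
    have hnd₂ : ¬ p₂ ∣ F := Nat.not_dvd_ordCompl hp₂ hn₁pos.ne'
    have hnd₁ : ¬ p₁ ∣ F := by
      intro hdvd
      exact (Nat.not_dvd_ordCompl hp₁ hn.ne') (hdvd.trans (Nat.ordCompl_dvd n₁ p₂))
    have hsplit : n = F * (p₁ ^ v₁ * p₂ ^ v₂) := by
      have e1 : p₁ ^ v₁ * n₁ = n := Nat.ordProj_mul_ordCompl_eq_self n p₁
      have e2 : p₂ ^ v₂ * F = n₁ := Nat.ordProj_mul_ordCompl_eq_self n₁ p₂
      rw [← e1, ← e2]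
      ring
    set w : 𝕋 := (p₁ ^ v₁ * p₂ ^ v₂ : ℕ) • z with hw
    have hwA : w ∈ A := hA_inv v₁ v₂ z hz
    have hwF : F • w = 0 := by
      rw [hw, smul_smul, ← hsplit]
      exact hzero
    obtain ⟨m, hm⟩ := torsion_lift hFpos hwF
    -- the congruence subsemigroup
    set t₀ : ℕ := F.totient with ht₀
    have ht₀pos : 0 < t₀ := Nat.totient_pos.mpr hFpos
    set T₁ : ℕ := p₁ ^ t₀ with hT₁
    set T₂ : ℕ := p₂ ^ t₀ with hT₂
    have hT₁2 : 2 ≤ T₁ := le_trans hp₁2 (Nat.le_self_pow ht₀pos.ne' _)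
    have hT₂2 : 2 ≤ T₂ := le_trans hp₂2 (Nat.le_self_pow ht₀pos.ne' _)
    have hind := prime_pow_mult_indep hp₁ hp₂ hne (t₁ := t₀) (t₂ := t₀) ht₀pos
    have hcop₁ : p₁.Coprime F := (Nat.Prime.coprime_iff_not_dvd hp₁).mpr hnd₁
    have hcop₂ : p₂.Coprime F := (Nat.Prime.coprime_iff_not_dvd hp₂).mpr hnd₂
    have htau : ∀ a b : ℕ, (T₁^a * T₂^b) ≡ 1 [MOD F] := by
      intro a b
      have h1 : p₁ ^ t₀ ≡ 1 [MOD F] := Nat.ModEq.pow_totient hcop₁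
      have h2 : p₂ ^ t₀ ≡ 1 [MOD F] := Nat.ModEq.pow_totient hcop₂
      have h3 : T₁^a ≡ 1^a [MOD F] := h1.pow a
      have h4 : T₂^b ≡ 1^b [MOD F] := h2.pow b
      simpa using h3.mul h4
    have htau1 : ∀ a b : ℕ, 1 ≤ T₁^a * T₂^b := by
      intro a b
      have : 0 < T₁^a * T₂^b := by positivity
      omega
    have htaudvd : ∀ a b : ℕ, F ∣ T₁^a * T₂^b - 1 := by
      intro a b
      exact (Nat.modEq_iff_dvd' (htau1 a b)).mp (htau a b).symm
    -- w is not in the orbit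
    have hwnotorb : w ∉ orb := by
      rintro ⟨a, b, hab⟩
      apply hXn (F * (p₁^a * p₂^b)) (by positivity)
      rw [← smul_smul, hab]
      exact hwF
    -- find orbit points near w and stretch
    obtain ⟨δ, hδ0, hδ⟩ := stretch_hit hT₁2 hT₂2 hind (-w) hε
    have hwcl : w ∈ closure orb := hwA
    rw [Metric.mem_closure_iff] at hwcl
    obtain ⟨y, hy, hyd⟩ := hwcl δ hδ0
    set v : 𝕋 := y - w with hv
    have hv0 : v ≠ 0 := by
      rw [hv, sub_ne_zero]
      intro h
      exact hwnotorb (h ▸ hy)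
    have hvn : ‖v‖ < δ := by
      rw [hv]
      rw [dist_eq_norm] at hyd
      rw [← norm_neg]
      simpa [neg_sub] using hyd
    obtain ⟨a, b, hab⟩ := hδ v hv0 hvn
    -- compute (T₁^a*T₂^b) • y
    have hfix : (T₁^a * T₂^b : ℕ) • w = w := by
      rw [hm]
      exact tau_fixes (htau1 a b) (htaudvd a b) hFpos m
    have hsmul_y : (T₁^a * T₂^b : ℕ) • y = w + (T₁^a * T₂^b : ℕ) • v := by
      rw [hv, smul_sub, hfix]
      abel
    have hnorm : ‖(T₁^a * T₂^b : ℕ) • y‖ < ε := by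
      rw [hsmul_y]
      have e : w + (T₁^a * T₂^b : ℕ) • v = (T₁^a * T₂^b : ℕ) • v - (-w) := by abel
      rw [e]
      exact hab
    have hyorb : (T₁^a * T₂^b : ℕ) • y ∈ orb := by
      have : (T₁^a * T₂^b : ℕ) = p₁^(t₀*a) * p₂^(t₀*b) := by
        rw [hT₁, hT₂, ← pow_mul, ← pow_mul]
      rw [this]
      exact horb_inv _ _ y hy
    exact absurd (horb_norm _ hyorb) (by linarith)
  -- choose a large prime f coprime to p₁ p₂ with 1/f < ε
  obtain ⟨f, hfle, hfprime⟩ := Nat.exists_infinite_primes (max (max p₁ p₂) ⌈1/ε⌉₊ + 1)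
  have hmax1 := Nat.le_max_left p₁ p₂
  have hmax2 := Nat.le_max_right p₁ p₂
  have hmax3 := Nat.le_max_left (max p₁ p₂) ⌈1/ε⌉₊
  have hmax4 := Nat.le_max_right (max p₁ p₂) ⌈1/ε⌉₊
  have hfp₁ : p₁ < f := by omega
  have hfp₂ : p₂ < f := by omega
  have hfpos : 0 < f := hfprime.pos
  have hf0 : (0:ℝ) < (f:ℝ) := by exact_mod_cast hfpos
  have hfε : 1/(f:ℝ) < ε := by
    have h1 : (1/ε) ≤ (⌈1/ε⌉₊ : ℝ) := Nat.le_ceil _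
    have h2 : ⌈1/ε⌉₊ < f := by omega
    have h3 : (1/ε) < (f:ℝ) := lt_of_le_of_lt h1 (by exact_mod_cast h2)
    rw [div_lt_iff₀ hε] at h3
    rw [div_lt_iff₀ hf0]
    nlinarith
  set t₀ : ℕ := f.totient with ht₀
  have ht₀pos : 0 < t₀ := Nat.totient_pos.mpr hfpos
  set T₁ : ℕ := p₁ ^ t₀ with hT₁
  set T₂ : ℕ := p₂ ^ t₀ with hT₂
  have hT₁2 : 2 ≤ T₁ := le_trans hp₁2 (Nat.le_self_pow ht₀pos.ne' _)
  have hT₂2 : 2 ≤ T₂ := le_trans hp₂2 (Nat.le_self_pow ht₀pos.ne' _)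
  have hind := prime_pow_mult_indep hp₁ hp₂ hne (t₁ := t₀) (t₂ := t₀) ht₀pos
  have hcop₁ : p₁.Coprime f := (Nat.coprime_primes hp₁ hfprime).mpr (by omega)
  have hcop₂ : p₂.Coprime f := (Nat.coprime_primes hp₂ hfprime).mpr (by omega)
  have htau : ∀ a b : ℕ, (T₁^a * T₂^b) ≡ 1 [MOD f] := by
    intro a b
    have h3 : T₁^a ≡ 1^a [MOD f] := (Nat.ModEq.pow_totient hcop₁).pow a
    have h4 : T₂^b ≡ 1^b [MOD f] := (Nat.ModEq.pow_totient hcop₂).pow b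
    simpa using h3.mul h4
  have htau1 : ∀ a b : ℕ, 1 ≤ T₁^a * T₂^b := by
    intro a b
    have : 0 < T₁^a * T₂^b := by positivity
    omega
  have htaudvd : ∀ a b : ℕ, f ∣ T₁^a * T₂^b - 1 := by
    intro a b
    exact (Nat.modEq_iff_dvd' (htau1 a b)).mp (htau a b).symm
  set c : ℕ → 𝕋 := fun j => ((((j:ℝ)/(f:ℝ)) : ℝ) : 𝕋) with hc
  have hfixc : ∀ (a b j : ℕ), (T₁^a*T₂^b : ℕ) • c j = c j := by
    intro a b j
    have h5 := tau_fixes (htau1 a b) (htaudvd a b) hfpos (j:ℤ)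
    have e : (((j:ℤ):ℝ)) = ((j:ℕ):ℝ) := by push_cast; rfl
    rw [e] at h5
    exact h5
  set Ak : ℕ → Set 𝕋 := fun k => {z | ∀ j : ℕ, j ≤ k → z + c j ∈ A} with hAk
  have hc0 : c 0 = 0 := by
    rw [hc]
    norm_num
  have hAkclosed : ∀ k, IsClosed (Ak k) := by
    intro k
    have e : Ak k = ⋂ (j : ℕ) (_ : j ≤ k), (fun z => z + c j) ⁻¹' A := by
      ext z
      simp [hAk, Set.mem_iInter]
    rw [e]
    exact isClosed_iInter fun j => isClosed_iInter fun _ =>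
      IsClosed.preimage (continuous_add_right _) isClosed_closure
  have hAksub : ∀ k, ∀ z ∈ Ak k, z ∈ A := by
    intro k z hz
    have h0 := hz 0 (Nat.zero_le _)
    rw [hc0, add_zero] at h0
    exact h0
  have hAkinv : ∀ k (a b : ℕ), ∀ z ∈ Ak k, (T₁^a*T₂^b : ℕ) • z ∈ Ak k := by
    intro k a b z hz j hj
    have h1 : (T₁^a*T₂^b : ℕ) • z + c j = (T₁^a*T₂^b : ℕ) • (z + c j) := by
      rw [smul_add, hfixc]
    rw [h1]
    have e : (T₁^a * T₂^b : ℕ) = p₁^(t₀*a) * p₂^(t₀*b) := by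
      rw [hT₁, hT₂, ← pow_mul, ← pow_mul]
    rw [e]
    exact hA_inv _ _ _ (hz j hj)
  have hAkinf : ∀ k, (Ak k).Nonempty → (Ak k).Infinite := by
    rintro k ⟨z, hz⟩
    have hmono : ∀ i i' : ℕ, i < i' → (T₁^i*T₂^0 : ℕ) • z ≠ (T₁^(i')*T₂^0 : ℕ) • z := by
      intro i i' hlt heq
      have hle : T₁^i ≤ T₁^(i') := Nat.pow_le_pow_right (by omega) hlt.le
      have hltp : T₁^i < T₁^(i') := Nat.pow_lt_pow_right (by omega) hlt
      set d : ℕ := T₁^(i') - T₁^i with hd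
      have hdpos : 0 < d := by omega
      have hdz : (d : ℕ) • z = 0 := by
        have e1 : ((d:ℕ):ℤ) = ((T₁^(i') : ℕ):ℤ) - ((T₁^i : ℕ):ℤ) := by
          rw [hd]
          push_cast [Nat.cast_sub hle]
          ring
        calc (d:ℕ) • z = ((d:ℕ):ℤ) • z := (natCast_zsmul z d).symm
          _ = ((T₁^(i') : ℕ):ℤ) • z - ((T₁^i : ℕ):ℤ) • z := by
              rw [e1, sub_zsmul]
              abel
          _ = (T₁^(i') : ℕ) • z - (T₁^i : ℕ) • z := by
              rw [natCast_zsmul, natCast_zsmul]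
          _ = 0 := by
            have e2 : (T₁^i : ℕ) • z = (T₁^(i') : ℕ) • z := by
              simpa [pow_zero, mul_one] using heq
            rw [e2, sub_self]
      exact hA_notorsion z (hAksub k z hz) d hdpos hdz
    apply Set.infinite_of_injective_forall_mem
      (f := fun i : ℕ => (T₁^i * T₂^0 : ℕ) • z)
    · intro i i' heq
      by_contra hne'
      rcases Nat.lt_or_ge i i' with h | h
      · exact hmono i i' h heq
      · have h2 : i' < i := by omega
        exact hmono i' i h2 heq.symm
    · intro i
      exact hAkinv k i 0 z hz
  have hcadd : ∀ k : ℕ, c (k+1) = c 1 + c k := by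
    intro k
    show ((((k+1:ℕ):ℝ)/(f:ℝ) : ℝ) : 𝕋) = ((((1:ℕ):ℝ)/(f:ℝ) : ℝ) : 𝕋) + ((((k:ℕ):ℝ)/(f:ℝ) : ℝ) : 𝕋)
    have e : (((k+1:ℕ):ℝ))/(f:ℝ) = ((1:ℕ):ℝ)/(f:ℝ) + ((k:ℕ):ℝ)/(f:ℝ) := by
      push_cast
      ring
    rw [e]
    rfl
  have hAkne : ∀ k, (Ak k).Nonempty := by
    intro k
    induction k with
    | zero =>
      refine ⟨X, fun j hj => ?_⟩
      have hj0 : j = 0 := by omega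
      subst hj0
      rw [hc0, add_zero]
      apply subset_closure
      exact ⟨0, 0, by norm_num⟩
    | succ k ih =>
      obtain ⟨z, hz, hz1⟩ := stretch_pair hT₁2 hT₂2 hind (hAkclosed k)
        (hAkinf k ih) (fun a b z hz => hAkinv k a b z hz) (c 1)
      refine ⟨z, fun j hj => ?_⟩
      rcases Nat.lt_or_ge j (k+1) with h | h
      · exact hz j (by omega)
      · have hjeq : j = k + 1 := by omega
        subst hjeq
        have e : z + c (k+1) = (z + c 1) + c k := by
          rw [hcadd, add_assoc]
        rw [e]
        exact hz1 k le_rfl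
  obtain ⟨z, hz⟩ := hAkne f
  obtain ⟨r, hr0, hr1, hrz⟩ := exists_lift_Ico z
  set J : ℕ := ⌊r * (f:ℝ)⌋₊ with hJ
  have hJ1 : (J:ℝ) ≤ r*(f:ℝ) := Nat.floor_le (by positivity)
  have hJ2 : r*(f:ℝ) < (J:ℝ) + 1 := Nat.lt_floor_add_one _
  rcases Nat.eq_zero_or_pos J with hJ0 | hJpos
  · have hrf : r < 1/(f:ℝ) := by
      rw [hJ0] at hJ2
      norm_num at hJ2
      rw [lt_div_iff₀ hf0]
      linarith
    have hnz : ‖z‖ < ε := by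
      calc ‖z‖ = ‖((r:ℝ) : 𝕋)‖ := by rw [hrz]
        _ ≤ |r| := norm_coe_le r
        _ = r := abs_of_nonneg hr0
        _ < 1/(f:ℝ) := hrf
        _ < ε := hfε
    exact absurd (hA_norm z (hAksub f z hz)) (by linarith)
  · have hJf : J ≤ f := by
      by_contra hcontra
      have h6 : (f:ℝ) + 1 ≤ (J:ℝ) + 1 := by
        have : f + 1 ≤ J + 1 := by omega
        exact_mod_cast this
      nlinarith
    set j : ℕ := f - J with hj
    have hy : z + c j ∈ A := hz j (Nat.sub_le _ _)
    have hcastj : ((j:ℕ):ℝ) = (f:ℝ) - (J:ℝ) := by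
      rw [hj]
      push_cast [Nat.cast_sub hJf]
      ring
    have hval : z + c j = (((r + ((j:ℕ):ℝ)/(f:ℝ) - 1 : ℝ)) : 𝕋) := by
      have e1 : z + c j = ((r + ((j:ℕ):ℝ)/(f:ℝ) : ℝ) : 𝕋) := by
        rw [← hrz]
        rfl
      have e2 := coe_sub_int (r + ((j:ℕ):ℝ)/(f:ℝ)) 1
      rw [Int.cast_one] at e2
      rw [e1, ← e2]
    have habs : |r + ((j:ℕ):ℝ)/(f:ℝ) - 1| < 1/(f:ℝ) := by
      rw [hcastj]
      have e3 : r + ((f:ℝ) - (J:ℝ))/(f:ℝ) - 1 = r - (J:ℝ)/(f:ℝ) := by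
        field_simp
        ring
      rw [e3, abs_lt]
      constructor
      · have h7 : (J:ℝ)/(f:ℝ) ≤ r := by
          rw [div_le_iff₀ hf0]
          nlinarith
        have h8 : (0:ℝ) < 1/(f:ℝ) := by positivity
        linarith
      · rw [sub_lt_iff_lt_add, ← add_div, lt_div_iff₀ hf0]
        nlinarith
    have hnz : ‖z + c j‖ < ε := by
      calc ‖z + c j‖ ≤ |r + ((j:ℕ):ℝ)/(f:ℝ) - 1| := by
            rw [hval]; exact norm_coe_le _
        _ < 1/(f:ℝ) := habs
        _ < ε := hfε
    exact absurd (hA_norm _ hy) (by linarith)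


lemma nearestIntDist_intCast (m : ℤ) : nearestIntDist ((m:ℤ):ℝ) = 0 := by
  refine le_antisymm ?_ (nearestIntDist_nonneg _)
  simpa using nearestIntDist_le ((m:ℤ):ℝ) m

lemma nearestIntDist_pos {z : ℝ} (hz : Irrational z) : 0 < nearestIntDist z := by
  rw [nearestIntDist_eq_round]
  rw [abs_pos, sub_ne_zero]
  exact hz.ne_int (round z)

lemma padic_weight {p₁ p₂ : ℕ} (hp₁ : p₁.Prime) (hp₂ : p₂.Prime) (hne : p₁ ≠ p₂) (a b : ℕ) :
    ((p₁^a * p₂^b : ℕ) : ℝ) * ((padicNorm p₁ (((p₁^a * p₂^b : ℕ) : ℕ) : ℚ)) : ℝ) *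
      ((padicNorm p₂ (((p₁^a * p₂^b : ℕ) : ℕ) : ℚ)) : ℝ) = 1 := by
  haveI : Fact p₁.Prime := ⟨hp₁⟩
  haveI : Fact p₂.Prime := ⟨hp₂⟩
  have hp₁0 : 0 < p₁ := hp₁.pos
  have hp₂0 : 0 < p₂ := hp₂.pos
  have hs0 : (((p₁^a * p₂^b : ℕ) : ℕ) : ℚ) ≠ 0 := by positivity
  have hv₁ : padicValNat p₁ (p₁^a * p₂^b) = a := by
    rw [padicValNat.mul (by positivity) (by positivity)]
    rw [padicValNat.prime_pow]
    have h0 : padicValNat p₁ (p₂^b) = 0 := by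
      apply padicValNat.eq_zero_of_not_dvd
      intro hdvd
      exact hne ((Nat.prime_dvd_prime_iff_eq hp₁ hp₂).mp (hp₁.dvd_of_dvd_pow hdvd))
    rw [h0]
    omega
  have hv₂ : padicValNat p₂ (p₁^a * p₂^b) = b := by
    rw [padicValNat.mul (by positivity) (by positivity)]
    rw [padicValNat.prime_pow]
    have h0 : padicValNat p₂ (p₁^a) = 0 := by
      apply padicValNat.eq_zero_of_not_dvd
      intro hdvd
      exact hne ((Nat.prime_dvd_prime_iff_eq hp₂ hp₁).mp (hp₂.dvd_of_dvd_pow hdvd)).symm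
    rw [h0]
    omega
  have hn₁ : padicNorm p₁ (((p₁^a * p₂^b : ℕ) : ℕ) : ℚ) = (p₁:ℚ)^(-(a:ℤ)) := by
    rw [padicNorm.eq_zpow_of_nonzero hs0]
    congr 1
    rw [padicValRat.of_nat, hv₁]
  have hn₂ : padicNorm p₂ (((p₁^a * p₂^b : ℕ) : ℕ) : ℚ) = (p₂:ℚ)^(-(b:ℤ)) := by
    rw [padicNorm.eq_zpow_of_nonzero hs0]
    congr 1
    rw [padicValRat.of_nat, hv₂]
  rw [hn₁, hn₂]
  have c₁ : (((p₁:ℚ)^(-(a:ℤ)) : ℚ) : ℝ) = (p₁:ℝ)^(-(a:ℤ)) := by push_cast; ring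
  have c₂ : (((p₂:ℚ)^(-(b:ℤ)) : ℚ) : ℝ) = (p₂:ℝ)^(-(b:ℤ)) := by push_cast; ring
  rw [c₁, c₂]
  have hc : ((p₁^a * p₂^b : ℕ) : ℝ) = (p₁:ℝ)^a * (p₂:ℝ)^b := by push_cast; ring
  rw [hc]
  have h₁0 : (0:ℝ) < ((p₁:ℝ)) := by exact_mod_cast hp₁0
  have h₂0 : (0:ℝ) < ((p₂:ℝ)) := by exact_mod_cast hp₂0
  rw [zpow_neg, zpow_neg, zpow_natCast, zpow_natCast]
  field_simp


end TwoPrimeAux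

open TwoPrimeAux

/-- For distinct primes `p₁, p₂` and every `u ∈ ℝ`,
`liminf_{q → ∞} q·|q|_{p₁}·|q|_{p₂}·⟨qu⟩ = 0`. -/
theorem liminf_two_primes_eq_zero (p₁ p₂ : ℕ) (hp₁ : p₁.Prime) (hp₂ : p₂.Prime)
    (hne : p₁ ≠ p₂) (u : ℝ) :
    Filter.liminf
      (fun q : ℕ => (q : ℝ) * (padicNorm p₁ (q : ℚ) : ℝ) * (padicNorm p₂ (q : ℚ) : ℝ) *
        nearestIntDist ((q : ℝ) * u))
      Filter.atTop = 0 := by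
  set F : ℕ → ℝ := fun q => (q : ℝ) * (padicNorm p₁ (q : ℚ) : ℝ) * (padicNorm p₂ (q : ℚ) : ℝ) *
        nearestIntDist ((q : ℝ) * u) with hF
  have hF0 : ∀ q, 0 ≤ F q := by
    intro q
    have h1 : (0:ℝ) ≤ (q:ℝ) := Nat.cast_nonneg q
    have h2 : (0:ℝ) ≤ ((padicNorm p₁ (q:ℚ) : ℚ) : ℝ) := by
      exact_mod_cast padicNorm.nonneg (q:ℚ)
    have h3 : (0:ℝ) ≤ ((padicNorm p₂ (q:ℚ) : ℚ) : ℝ) := by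
      exact_mod_cast padicNorm.nonneg (q:ℚ)
    have h4 := nearestIntDist_nonneg ((q:ℝ)*u)
    exact mul_nonneg (mul_nonneg (mul_nonneg h1 h2) h3) h4
  -- key smallness statement for prime-power-smooth q
  have hFq_eq : ∀ a b : ℕ, F (p₁^a * p₂^b) = nearestIntDist (((p₁^a*p₂^b : ℕ):ℝ) * u) := by
    intro a b
    have hw := padic_weight hp₁ hp₂ hne a b
    rw [hF]
    simp only []
    rw [hw, one_mul]
  have hnorm_eq : ∀ q : ℕ, nearestIntDist ((q:ℝ)*u) = ‖(q : ℕ) • ((u : ℝ) : AddCircle (1:ℝ))‖ := by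
    intro q
    rw [nsmul_coe, nearestIntDist_eq_norm]
  have hfreq : ∀ ε : ℝ, 0 < ε → ∀ N : ℕ, ∃ q ≥ N, F q ≤ ε := by
    intro ε hε N
    by_cases hu : Irrational u
    · by_cases hN : (Finset.Ico 1 N).Nonempty
      · have hSne : ((Finset.Ico 1 N).image
            (fun q : ℕ => nearestIntDist ((q:ℝ)*u))).Nonempty := hN.image _
        set m : ℝ := ((Finset.Ico 1 N).image
            (fun q : ℕ => nearestIntDist ((q:ℝ)*u))).min' hSne with hm
        have hm0 : 0 < m := by
          have hmem := Finset.min'_mem _ hSne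
          rw [Finset.mem_image] at hmem
          obtain ⟨q, hq, hqe⟩ := hmem
          rw [Finset.mem_Ico] at hq
          have : Irrational ((q:ℝ)*u) := hu.natCast_mul (by omega)
          rw [hm, ← hqe]
          exact nearestIntDist_pos this
        have hε₀ : 0 < min ε m := lt_min hε hm0
        obtain ⟨a, b, hab⟩ := orbit_inf_zero hp₁ hp₂ hne hu hε₀
        set q : ℕ := p₁^a * p₂^b with hq
        have hsmall : nearestIntDist ((q:ℝ)*u) < min ε m := by
          rw [hnorm_eq]
          exact hab
        have hqN : N ≤ q := by
          by_contra hcon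
          have hq1 : 1 ≤ q := Nat.mul_pos (pow_pos hp₁.pos a) (pow_pos hp₂.pos b)
          have hqmem : q ∈ Finset.Ico 1 N := by
            rw [Finset.mem_Ico]
            omega
          have hle : m ≤ nearestIntDist ((q:ℝ)*u) :=
            Finset.min'_le _ _ (Finset.mem_image_of_mem _ hqmem)
          have := lt_of_lt_of_le hsmall (min_le_right _ _)
          linarith
        refine ⟨q, hqN, ?_⟩
        rw [hFq_eq a b]
        exact le_of_lt (lt_of_lt_of_le hsmall (min_le_left _ _))
      · -- N ≤ 1
        have hN1 : N ≤ 1 := by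
          by_contra hcon
          exact hN ⟨1, by rw [Finset.mem_Ico]; omega⟩
        obtain ⟨a, b, hab⟩ := orbit_inf_zero hp₁ hp₂ hne hu hε
        set q : ℕ := p₁^a * p₂^b with hq
        have hq1 : 1 ≤ q := Nat.mul_pos (pow_pos hp₁.pos a) (pow_pos hp₂.pos b)
        refine ⟨q, by omega, ?_⟩
        rw [hFq_eq a b]
        have hsmall : nearestIntDist ((q:ℝ)*u) < ε := by
          rw [hnorm_eq]
          exact hab
        exact hsmall.le
    · -- u rational
      have : u ∈ Set.range ((↑) : ℚ → ℝ) := not_not.mp (by simpa [Irrational] using hu)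
      obtain ⟨r, hr⟩ := this
      set q : ℕ := r.den * (N+1) with hq
      have hden : 1 ≤ r.den := r.den_pos
      refine ⟨q, by
        calc N ≤ N + 1 := by omega
          _ = 1 * (N+1) := by ring
          _ ≤ r.den * (N+1) := by
              apply Nat.mul_le_mul_right
              omega, ?_⟩
      have hint : ((q:ℝ)) * u = (((N+1 : ℕ) * r.num : ℤ) : ℝ) := by
        rw [← hr, hq]
        push_cast
        have hd : ((r.den:ℝ)) * (r:ℝ) = (r.num:ℝ) := by
          rw [Rat.cast_def]
          field_simp
        calc ((r.den:ℝ)) * ((N:ℝ)+1) * r = ((N:ℝ)+1) * (((r.den:ℝ)) * r) := by ring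
          _ = ((N:ℝ)+1) * (r.num:ℝ) := by rw [hd]
          _ = ((N:ℝ)+1) * r.num := by ring
      have hD : nearestIntDist ((q:ℝ)*u) = 0 := by
        rw [hint]
        exact nearestIntDist_intCast _
      rw [hF]
      simp only []
      rw [hD, mul_zero]
      exact hε.le
  -- liminf computation
  have hLB : ∀ᶠ q in Filter.atTop, (0:ℝ) ≤ F q := Filter.Eventually.of_forall hF0
  have hbdd : Filter.IsBoundedUnder (· ≥ ·) Filter.atTop F := ⟨0, by
    rw [Filter.eventually_map]
    exact hLB⟩
  have hfreq' : ∀ ε : ℝ, 0 < ε → ∃ᶠ q in Filter.atTop, F q ≤ ε := by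
    intro ε hε
    rw [Filter.frequently_atTop]
    intro N
    exact hfreq ε hε N
  have hcob : Filter.IsCoboundedUnder (· ≥ ·) Filter.atTop F :=
    Filter.IsCoboundedUnder.of_frequently_le (hfreq' 1 one_pos)
  apply le_antisymm
  · by_contra hpos
    push_neg at hpos
    have h1 : Filter.liminf F Filter.atTop ≤ Filter.liminf F Filter.atTop / 2 :=
      Filter.liminf_le_of_frequently_le (hfreq' _ (by linarith)) hbdd
    linarith
  · exact Filter.le_liminf_of_le hcob hLB
end

section
/- Let p₁ and p₂ be two distinct prime numbers and δ > 0. If u ∈ ℝ satisfies q·|q|_{p₁}·|q|_{p₂}·⟨qu⟩ ≥ δ for every positive integer q, then both p₁u and p₂u satisfy the same inequality: q·|q|_{p₁}·|q|_{p₂}·⟨q·(p₁u)⟩ ≥ δ and q·|q|_{p₁}·|q|_{p₂}·⟨q·(p₂u)⟩ ≥ δ for every positive integer q. -/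
lemma aux_key (p₁ p₂ : ℕ) (hp₁ : p₁.Prime) (hp₂ : p₂.Prime) (hne : p₁ ≠ p₂) (q : ℕ) :
    ((q * p₁ : ℕ) : ℝ) * (padicNorm p₁ ((q * p₁ : ℕ) : ℚ) : ℝ) *
      (padicNorm p₂ ((q * p₁ : ℕ) : ℚ) : ℝ) =
    (q : ℝ) * (padicNorm p₁ (q : ℚ) : ℝ) * (padicNorm p₂ (q : ℚ) : ℝ) := by
  haveI : Fact p₁.Prime := ⟨hp₁⟩
  haveI : Fact p₂.Prime := ⟨hp₂⟩
  have h1 : padicNorm p₁ (p₁ : ℚ) = (p₁ : ℚ)⁻¹ := padicNorm.padicNorm_p hp₁.one_lt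
  have h2 : padicNorm p₂ (p₁ : ℚ) = 1 := padicNorm.padicNorm_of_prime_of_ne hne.symm
  push_cast [padicNorm.mul, h1, h2]
  have : (p₁ : ℝ) ≠ 0 := by exact_mod_cast hp₁.ne_zero
  field_simp

/-- If `q·|q|_{p₁}·|q|_{p₂}·⟨qu⟩ ≥ δ` for all positive integers `q`, then the same
inequality holds with `u` replaced by `p₁·u` and by `p₂·u`. -/
theorem invariance_under_times_p (p₁ p₂ : ℕ) (hp₁ : p₁.Prime) (hp₂ : p₂.Prime)
    (hne : p₁ ≠ p₂) (δ : ℝ) (hδ : 0 < δ) (u : ℝ)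
    (h : ∀ q : ℕ, 0 < q →
      δ ≤ (q : ℝ) * (padicNorm p₁ (q : ℚ) : ℝ) * (padicNorm p₂ (q : ℚ) : ℝ) *
        nearestIntDist ((q : ℝ) * u)) :
    (∀ q : ℕ, 0 < q →
      δ ≤ (q : ℝ) * (padicNorm p₁ (q : ℚ) : ℝ) * (padicNorm p₂ (q : ℚ) : ℝ) *
        nearestIntDist ((q : ℝ) * ((p₁ : ℝ) * u))) ∧
    (∀ q : ℕ, 0 < q →
      δ ≤ (q : ℝ) * (padicNorm p₁ (q : ℚ) : ℝ) * (padicNorm p₂ (q : ℚ) : ℝ) *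
        nearestIntDist ((q : ℝ) * ((p₂ : ℝ) * u))) := by
  constructor
  · intro q hq
    have := h (q * p₁) (Nat.mul_pos hq hp₁.pos)
    rw [aux_key p₁ p₂ hp₁ hp₂ hne q] at this
    have harg : ((q * p₁ : ℕ) : ℝ) * u = (q : ℝ) * ((p₁ : ℝ) * u) := by push_cast; ring
    rwa [harg] at this
  · intro q hq
    have := h (q * p₂) (Nat.mul_pos hq hp₂.pos)
    have key : ((q * p₂ : ℕ) : ℝ) * (padicNorm p₁ ((q * p₂ : ℕ) : ℚ) : ℝ) *
        (padicNorm p₂ ((q * p₂ : ℕ) : ℚ) : ℝ) =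
        (q : ℝ) * (padicNorm p₁ (q : ℚ) : ℝ) * (padicNorm p₂ (q : ℚ) : ℝ) := by
      have := aux_key p₂ p₁ hp₂ hp₁ hne.symm q
      linarith [this]
    rw [key] at this
    have harg : ((q * p₂ : ℕ) : ℝ) * u = (q : ℝ) * ((p₂ : ℝ) * u) := by push_cast; ring
    rwa [harg] at this
end

section
/- The projection SL(2,ℝ) × SL(2,ℤ_p) → SL(2,ℝ) onto the first factor induces a well-defined continuous surjection from X = G/Γ onto SL(2,ℝ)/SL(2,ℤ), and this map has compact fibers (the preimage of every point is compact). -/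
open Matrix MatrixGroups

/-- Topology on the special linear group, induced from the space of matrices. -/
instance Matrix.SpecialLinearGroup.topologicalSpace {n : Type*} [DecidableEq n] [Fintype n]
    {R : Type*} [CommRing R] [TopologicalSpace R] :
    TopologicalSpace (Matrix.SpecialLinearGroup n R) :=
  TopologicalSpace.induced (fun A => (A : Matrix n n R)) inferInstance

/-- The ring `ℤ[1/p]`, realized as the localization of `ℤ` away from `p`. -/
abbrev ZInvP (p : ℕ) : Type := Localization.Away (p : ℤ)

/-- The canonical ring homomorphism `ℤ[1/p] → ℝ`. -/
noncomputable def zInvPToR (p : ℕ) [Fact p.Prime] : ZInvP p →+* ℝ :=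
  Localization.awayLift (Int.castRingHom ℝ) (p : ℤ) (by
    have hp : ((p : ℤ) : ℝ) ≠ 0 := by
      exact_mod_cast Int.natCast_ne_zero.mpr (Fact.out : p.Prime).ne_zero
    simpa [isUnit_iff_ne_zero] using hp)

/-- The canonical ring homomorphism `ℤ[1/p] → ℚ_p`. -/
noncomputable def zInvPToQp (p : ℕ) [Fact p.Prime] : ZInvP p →+* ℚ_[p] :=
  Localization.awayLift (Int.castRingHom ℚ_[p]) (p : ℤ) (by
    have hp : ((p : ℤ) : ℚ_[p]) ≠ 0 := by
      exact_mod_cast Int.natCast_ne_zero.mpr (Fact.out : p.Prime).ne_zero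
    simpa [isUnit_iff_ne_zero] using hp)

/-- The group `G = SL(2,ℝ) × SL(2,ℚ_p)`. -/
abbrev GP (p : ℕ) [Fact p.Prime] : Type := SL(2, ℝ) × SL(2, ℚ_[p])

/-- The diagonal embedding `ι : SL(2,ℤ[1/p]) → G`, `ι(A) = (A, A)`. -/
noncomputable def iotaP (p : ℕ) [Fact p.Prime] : SL(2, ZInvP p) →* GP p :=
  (Matrix.SpecialLinearGroup.map (zInvPToR p)).prod
    (Matrix.SpecialLinearGroup.map (zInvPToQp p))

/-- The lattice `Γ = ι(SL(2,ℤ[1/p]))` as a subgroup of `G`. -/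
noncomputable def GammaP (p : ℕ) [Fact p.Prime] : Subgroup (GP p) := (iotaP p).range

/-- The homogeneous space `X = G/Γ` (with the quotient topology). -/
abbrev XP (p : ℕ) [Fact p.Prime] : Type := GP p ⧸ GammaP p

/-- The subgroup `SL(2,ℤ)` of `SL(2,ℝ)` (the image of the integral special linear group). -/
noncomputable def SL2ZinR : Subgroup SL(2, ℝ) :=
  (Matrix.SpecialLinearGroup.map (Int.castRingHom ℝ)).range

section Lemmas
variable (p : ℕ) [Fact p.Prime]


lemma phiQ_int (n : ℤ) : zInvPToQp p (algebraMap ℤ (ZInvP p) n) = (n : ℚ_[p]) := by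
  simpa using eq_intCast ((zInvPToQp p).comp (algebraMap ℤ (ZInvP p))) n

lemma phiR_int (n : ℤ) : zInvPToR p (algebraMap ℤ (ZInvP p) n) = (n : ℝ) := by
  simpa using eq_intCast ((zInvPToR p).comp (algebraMap ℤ (ZInvP p))) n

lemma phiQ_p : zInvPToQp p (algebraMap ℤ (ZInvP p) (p : ℤ)) = (p : ℚ_[p]) := by
  simp [zInvPToQp, Localization.awayLift]

lemma phiQ_invSelf : zInvPToQp p (IsLocalization.Away.invSelf (S := ZInvP p) (p : ℤ)) = (p : ℚ_[p])⁻¹ := by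
  have h := congrArg (zInvPToQp p) (IsLocalization.Away.mul_invSelf (S := ZInvP p) (p : ℤ))
  rw [_root_.map_mul, _root_.map_one, phiQ_p] at h
  have hp : (p : ℚ_[p]) ≠ 0 := by
    exact_mod_cast (Nat.cast_ne_zero (R := ℚ_[p])).2 (Fact.out : p.Prime).ne_zero
  field_simp at h ⊢
  linear_combination h

lemma exists_int_of_norm_le_one (x : ZInvP p) (h : ‖zInvPToQp p x‖ ≤ 1) :
    ∃ n : ℤ, (algebraMap ℤ (ZInvP p)) n = x := by
  obtain ⟨k, m, hx⟩ := IsLocalization.Away.surj (S := ZInvP p) (p : ℤ) x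
  have hQ : zInvPToQp p x * (p : ℚ_[p]) ^ k = (m : ℚ_[p]) := by
    have := congrArg (zInvPToQp p) hx
    simpa [_root_.map_mul, map_pow, phiQ_p, map_intCast] using this
  have hnorm : ‖(m : ℚ_[p])‖ ≤ (p : ℝ) ^ (-(k : ℤ)) := by
    rw [← hQ, norm_mul, norm_pow, Padic.norm_p]
    calc ‖zInvPToQp p x‖ * ((p:ℝ)⁻¹)^k ≤ 1 * ((p:ℝ)⁻¹)^k := by
          apply mul_le_mul_of_nonneg_right h; positivity
      _ = (p : ℝ) ^ (-(k:ℤ)) := by rw [one_mul, inv_pow, ← zpow_natCast, ← _root_.zpow_neg]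
  have hdvd : ((p : ℤ) ^ k ∣ m) := (Padic.norm_int_le_pow_iff_dvd m k).mp hnorm
  obtain ⟨n, rfl⟩ := hdvd
  refine ⟨n, ?_⟩
  have hu : IsUnit ((algebraMap ℤ (ZInvP p)) (p : ℤ) ^ k) :=
    IsLocalization.Away.algebraMap_pow_isUnit (p : ℤ) k
  apply hu.mul_left_cancel
  rw [mul_comm ((algebraMap ℤ (ZInvP p)) (p:ℤ) ^ k) x, hx, _root_.map_mul, map_pow, mul_comm]

lemma dense_approx (x : ℚ_[p]) (n : ℕ) :
    ∃ t : ZInvP p, ‖x - zInvPToQp p t‖ ≤ (p : ℝ) ^ (-(n : ℤ)) := by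
  have hp1 : (1 : ℝ) < p := by exact_mod_cast (Fact.out : p.Prime).one_lt
  obtain ⟨k, hk⟩ : ∃ k : ℕ, ‖x‖ ≤ (p : ℝ) ^ k := by
    obtain ⟨k, hk⟩ := pow_unbounded_of_one_lt ‖x‖ hp1
    exact ⟨k, hk.le⟩
  have hxk : ‖x * (p : ℚ_[p]) ^ k‖ ≤ 1 := by
    rw [norm_mul, norm_pow, Padic.norm_p]
    calc ‖x‖ * ((p:ℝ)⁻¹)^k ≤ (p:ℝ)^k * ((p:ℝ)⁻¹)^k := by
          apply mul_le_mul_of_nonneg_right hk; positivity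
      _ = 1 := by rw [← mul_pow, mul_inv_cancel₀ (by positivity), one_pow]
  set y : ℤ_[p] := ⟨x * (p : ℚ_[p]) ^ k, hxk⟩ with hy
  set m : ℕ := y.appr (n + k) with hm
  have hspec : ‖y - (m : ℤ_[p])‖ ≤ (p : ℝ) ^ (-((n + k : ℕ) : ℤ)) :=
    (PadicInt.norm_le_pow_iff_mem_span_pow _ _).2 (y.appr_spec (n + k))
  refine ⟨algebraMap ℤ (ZInvP p) (m : ℤ) * (IsLocalization.Away.invSelf (S := ZInvP p) (p : ℤ)) ^ k, ?_⟩
  have hval : zInvPToQp p (algebraMap ℤ (ZInvP p) (m : ℤ) *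
      (IsLocalization.Away.invSelf (S := ZInvP p) (p : ℤ)) ^ k) = (m : ℚ_[p]) * ((p : ℚ_[p])⁻¹) ^ k := by
    rw [_root_.map_mul, map_pow, phiQ_invSelf, phiQ_int]; push_cast; ring
  rw [hval]
  have hp0 : (p : ℚ_[p]) ≠ 0 := by
    exact_mod_cast (Nat.cast_ne_zero (R := ℚ_[p])).2 (Fact.out : p.Prime).ne_zero
  have key : x - (m : ℚ_[p]) * ((p : ℚ_[p])⁻¹) ^ k = ((y : ℚ_[p]) - (m : ℚ_[p])) * ((p : ℚ_[p])⁻¹) ^ k := by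
    have : (y : ℚ_[p]) = x * (p : ℚ_[p]) ^ k := rfl
    rw [this, sub_mul, mul_assoc, ← mul_pow, mul_inv_cancel₀ hp0, one_pow, mul_one]
  rw [key, norm_mul, norm_pow, norm_inv, Padic.norm_p, inv_inv]
  have hyn : ‖(y : ℚ_[p]) - (m : ℚ_[p])‖ ≤ (p : ℝ) ^ (-((n + k : ℕ) : ℤ)) := by
    have : ((y - (m : ℤ_[p]) : ℤ_[p]) : ℚ_[p]) = (y : ℚ_[p]) - (m : ℚ_[p]) := by push_cast; ring
    rw [← this]; rw [← PadicInt.norm_def] at *; exact hspec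
  calc ‖(y : ℚ_[p]) - (m : ℚ_[p])‖ * (p : ℝ) ^ k
      ≤ (p : ℝ) ^ (-((n + k : ℕ) : ℤ)) * (p : ℝ) ^ k := by
        apply mul_le_mul_of_nonneg_right hyn; positivity
    _ = (p : ℝ) ^ (-(n : ℤ)) := by
        rw [← zpow_natCast ((p:ℝ)) k, ← zpow_add₀ (by positivity : (p:ℝ) ≠ 0)]
        congr 1; push_cast; ring

/-- The compact open subgroup `SL(2,ℤ_p)` inside `SL(2,ℚ_p)`. -/
noncomputable def Kgrp : Subgroup SL(2, ℚ_[p]) :=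
  (Matrix.SpecialLinearGroup.map (PadicInt.Coe.ringHom (p := p))).range

lemma mem_Kgrp_iff (B : SL(2, ℚ_[p])) : B ∈ Kgrp p ↔ ∀ i j, ‖B i j‖ ≤ 1 := by
  constructor
  · rintro ⟨k, rfl⟩ i j
    have : (Matrix.SpecialLinearGroup.map (PadicInt.Coe.ringHom (p := p)) k) i j
        = ((k i j : ℤ_[p]) : ℚ_[p]) := rfl
    rw [this]
    exact (k i j).2
  · intro h
    set N : Matrix (Fin 2) (Fin 2) ℤ_[p] := Matrix.of fun i j => ⟨B i j, h i j⟩ with hN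
    have hdet : N.det = 1 := by
      have hinj : Function.Injective (PadicInt.Coe.ringHom (p := p)) := Subtype.val_injective
      apply hinj
      rw [RingHom.map_det]
      have : (PadicInt.Coe.ringHom (p := p)).mapMatrix N
          = (B : Matrix (Fin 2) (Fin 2) ℚ_[p]) := by
        ext i j; rfl
      rw [this, B.2, _root_.map_one]
    refine ⟨⟨N, hdet⟩, ?_⟩
    ext i j; rfl

lemma exists_int_entries (P : SL(2, ZInvP p))
    (h : Matrix.SpecialLinearGroup.map (zInvPToQp p) P ∈ Kgrp p) :
    ∃ Z : SL(2, ℤ), Matrix.SpecialLinearGroup.map (Int.castRingHom (ZInvP p)) Z = P := by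
  rw [mem_Kgrp_iff] at h
  have h' : ∀ i j, ‖zInvPToQp p (P i j)‖ ≤ 1 := fun i j => h i j
  choose n hn using fun i j => exists_int_of_norm_le_one p (P i j) (h' i j)
  set N : Matrix (Fin 2) (Fin 2) ℤ := Matrix.of fun i j => n i j with hNdef
  have hmap : (Int.castRingHom (ZInvP p)).mapMatrix N = (P : Matrix (Fin 2) (Fin 2) (ZInvP p)) := by
    ext i j
    simpa [N, ← algebraMap_int_eq] using hn i j
  have hdetZ : (Int.castRingHom (ZInvP p)) N.det = 1 := by
    rw [RingHom.map_det, hmap, P.2]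
  have hdet : N.det = 1 := by
    have h1 := congrArg (zInvPToR p) hdetZ
    rw [_root_.map_one] at h1
    have h2 : zInvPToR p ((Int.castRingHom (ZInvP p)) N.det) = (N.det : ℝ) := by
      simpa using eq_intCast ((zInvPToR p).comp (Int.castRingHom (ZInvP p))) N.det
    rw [h2] at h1
    exact_mod_cast h1
  refine ⟨⟨N, hdet⟩, ?_⟩
  exact Subtype.ext hmap


lemma core (B : SL(2, ℚ_[p])) (hmaxv : ∀ i j, ‖B i j‖ ≤ ‖B 0 0‖) :
    ∃ M : SL(2, ZInvP p), B * Matrix.SpecialLinearGroup.map (zInvPToQp p) M ∈ Kgrp p := by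
  have hp1 : (1:ℝ) < p := by exact_mod_cast (Fact.out : p.Prime).one_lt
  have hp0 : (0:ℝ) < p := lt_trans one_pos hp1
  set a := B 0 0 with hadef
  set b := B 0 1 with hbdef
  set c := B 1 0 with hcdef
  set d := B 1 1 with hddef
  have hdet : a * d - b * c = 1 := by
    have h2 := B.2
    rw [Matrix.det_fin_two] at h2
    exact h2
  have hna : 1 ≤ ‖a‖ := by
    have h1 : (1:ℝ) = ‖a * d - b * c‖ := by rw [hdet, norm_one]
    have h2 : ‖a * d - b * c‖ ≤ max ‖a * d‖ ‖b * c‖ := by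
      rw [sub_eq_add_neg]
      simpa [norm_neg] using Padic.nonarchimedean (a * d) (-(b * c))
    have h3 : ‖a * d‖ ≤ ‖a‖ * ‖a‖ := by
      rw [norm_mul]
      exact mul_le_mul_of_nonneg_left (hmaxv 1 1) (norm_nonneg a)
    have h4 : ‖b * c‖ ≤ ‖a‖ * ‖a‖ := by
      rw [norm_mul]
      exact mul_le_mul (hmaxv 0 1) (hmaxv 1 0) (norm_nonneg c) (norm_nonneg a)
    have h5 : 1 ≤ ‖a‖ * ‖a‖ := by
      rw [h1]
      exact le_trans h2 (max_le h3 h4)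
    nlinarith [norm_nonneg a]
  have ha0 : a ≠ 0 := by
    intro h; rw [h, norm_zero] at hna; linarith
  -- the valuation
  set v : ℕ := (-a.valuation).toNat with hvdef
  have hval : ((v : ℤ)) = -a.valuation := by
    rw [hvdef]
    apply Int.toNat_of_nonneg
    by_contra hcon
    push_neg at hcon
    have h1 : ‖a‖ = (p:ℝ) ^ (-a.valuation) := Padic.norm_eq_zpow_neg_valuation ha0
    have h2 : (p:ℝ) ^ (0:ℤ) ≤ (p:ℝ) ^ (-a.valuation) := by
      rw [zpow_zero]; rw [← h1]; exact hna
    rw [zpow_le_zpow_iff_right₀ hp1] at h2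
    omega
  have hva : ‖a‖ = (p:ℝ) ^ (v:ℤ) := by
    rw [Padic.norm_eq_zpow_neg_valuation ha0, hval]
  -- approximate -(b/a)
  obtain ⟨t, ht⟩ := dense_approx p (-(b / a)) (3 * v)
  set τ := zInvPToQp p t with hτdef
  have hτ : ‖τ + b / a‖ ≤ (p:ℝ) ^ (-(3 * v : ℕ) : ℤ) := by
    have : τ + b / a = -(-(b / a) - τ) := by ring
    rw [this, norm_neg]
    exact ht
  -- the matrix M
  set pz : ZInvP p := algebraMap ℤ (ZInvP p) (p : ℤ) with hpz
  set iv : ZInvP p := IsLocalization.Away.invSelf (S := ZInvP p) (p : ℤ) with hiv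
  have hpiv : pz * iv = 1 := IsLocalization.Away.mul_invSelf (p : ℤ)
  have hdetM : (!![pz ^ v, t * iv ^ v; 0, iv ^ v] : Matrix (Fin 2) (Fin 2) (ZInvP p)).det = 1 := by
    rw [Matrix.det_fin_two_of]
    rw [mul_zero, sub_zero, ← mul_pow, hpiv, one_pow]
  refine ⟨⟨!![pz ^ v, t * iv ^ v; 0, iv ^ v], hdetM⟩, ?_⟩
  set π : ℚ_[p] := (p : ℚ_[p]) with hπ
  have hπ0 : π ≠ 0 := by
    rw [hπ]
    exact_mod_cast (Nat.cast_ne_zero (R := ℚ_[p])).2 (Fact.out : p.Prime).ne_zero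
  have hMQ : ((Matrix.SpecialLinearGroup.map (zInvPToQp p)
      (⟨!![pz ^ v, t * iv ^ v; 0, iv ^ v], hdetM⟩ : SL(2, ZInvP p))) : Matrix (Fin 2) (Fin 2) ℚ_[p])
      = !![π ^ v, τ * π⁻¹ ^ v; 0, π⁻¹ ^ v] := by
    ext i j
    fin_cases i <;> fin_cases j <;> erw [Matrix.SpecialLinearGroup.map_apply_coe] <;>
      simp [Matrix.SpecialLinearGroup.map_apply_coe, map_pow, phiQ_p, phiQ_invSelf, hπ, hpz, hiv, hτdef,
        _root_.map_mul]
  have hprod : ((B * Matrix.SpecialLinearGroup.map (zInvPToQp p)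
      (⟨!![pz ^ v, t * iv ^ v; 0, iv ^ v], hdetM⟩ : SL(2, ZInvP p))) :
        Matrix (Fin 2) (Fin 2) ℚ_[p])
      = !![a * π ^ v, (a * τ + b) * π⁻¹ ^ v; c * π ^ v, (c * τ + d) * π⁻¹ ^ v] := by
    rw [hMQ]
    have hB : (B : Matrix (Fin 2) (Fin 2) ℚ_[p]) = !![a, b; c, d] := by
      rw [hadef, hbdef, hcdef, hddef]
      exact Matrix.eta_fin_two _
    rw [hB, Matrix.mul_fin_two]
    refine Matrix.ext ?_
    intro i j
    fin_cases i <;> fin_cases j <;> simp <;> ring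
  -- norms
  have hnπv : ‖π ^ v‖ = (p:ℝ) ^ (-(v:ℤ)) := Padic.norm_p_pow v
  have hnπiv : ‖π⁻¹ ^ v‖ = (p:ℝ) ^ (v:ℤ) := by
    rw [inv_pow, norm_inv, hnπv, ← _root_.zpow_neg, neg_neg]
  rw [mem_Kgrp_iff]
  intro i j
  have hgoal : ∀ i j, ((B * Matrix.SpecialLinearGroup.map (zInvPToQp p)
      (⟨!![pz ^ v, t * iv ^ v; 0, iv ^ v], hdetM⟩ : SL(2, ZInvP p))) i j)
      = (!![a * π ^ v, (a * τ + b) * π⁻¹ ^ v; c * π ^ v, (c * τ + d) * π⁻¹ ^ v] : Matrix (Fin 2) (Fin 2) ℚ_[p]) i j := by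
    intro i j; rw [← hprod]; rfl
  rw [hgoal]
  have key1 : ‖a * τ + b‖ ≤ (p:ℝ) ^ (-(2 * v : ℕ) : ℤ) := by
    have heq : a * τ + b = a * (τ + b / a) := by
      have h2 : a * (τ + b / a) = a * τ + b * (a * a⁻¹) := by ring
      rw [h2, mul_inv_cancel₀ ha0, mul_one]
    rw [heq, norm_mul, hva]
    calc (p:ℝ) ^ (v:ℤ) * ‖τ + b / a‖ ≤ (p:ℝ) ^ (v:ℤ) * (p:ℝ) ^ (-(3 * v : ℕ) : ℤ) := by
          exact mul_le_mul_of_nonneg_left hτ (by positivity)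
      _ = (p:ℝ) ^ (-(2 * v : ℕ) : ℤ) := by
          rw [← zpow_add₀ (ne_of_gt hp0)]; congr 1; push_cast; ring
  have key2 : ‖c * τ + d‖ ≤ (p:ℝ) ^ (-(v:ℤ)) := by
    have h1 : c * b + 1 = a * d := by linear_combination -hdet
    have heq : c * τ + d = c * (τ + b / a) + a⁻¹ := by
      have h2 : c * (τ + b / a) + a⁻¹ = c * τ + (c * b + 1) * a⁻¹ := by ring
      rw [h2, h1, mul_comm a d, mul_assoc, mul_inv_cancel₀ ha0, mul_one]
    rw [heq]
    have h1 : ‖c * (τ + b / a)‖ ≤ (p:ℝ) ^ (-(2 * v : ℕ) : ℤ) := by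
      rw [norm_mul]
      calc ‖c‖ * ‖τ + b / a‖ ≤ (p:ℝ) ^ (v:ℤ) * (p:ℝ) ^ (-(3 * v : ℕ) : ℤ) := by
            apply mul_le_mul (by rw [← hva]; exact hmaxv 1 0) hτ (norm_nonneg _) (by positivity)
        _ = (p:ℝ) ^ (-(2 * v : ℕ) : ℤ) := by
            rw [← zpow_add₀ (ne_of_gt hp0)]; congr 1; push_cast; ring
    have h2 : ‖a⁻¹‖ = (p:ℝ) ^ (-(v:ℤ)) := by
      rw [norm_inv, hva, ← _root_.zpow_neg]
    have h3 := Padic.nonarchimedean (c * (τ + b / a)) a⁻¹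
    apply le_trans h3
    apply max_le
    · apply le_trans h1
      rw [zpow_le_zpow_iff_right₀ hp1]
      push_cast; omega
    · rw [h2]
  fin_cases i <;> fin_cases j
  · show ‖a * π ^ v‖ ≤ 1
    rw [norm_mul, hva, hnπv, ← zpow_add₀ (ne_of_gt hp0), add_neg_cancel, zpow_zero]
  · show ‖(a * τ + b) * π⁻¹ ^ v‖ ≤ 1
    rw [norm_mul, hnπiv]
    calc ‖a * τ + b‖ * (p:ℝ) ^ (v:ℤ) ≤ (p:ℝ) ^ (-(2 * v : ℕ) : ℤ) * (p:ℝ) ^ (v:ℤ) :=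
          mul_le_mul_of_nonneg_right key1 (by positivity)
      _ ≤ 1 := by
          rw [← zpow_add₀ (ne_of_gt hp0), ← zpow_zero (p:ℝ), zpow_le_zpow_iff_right₀ hp1]
          push_cast; omega
  · show ‖c * π ^ v‖ ≤ 1
    rw [norm_mul, hnπv]
    calc ‖c‖ * (p:ℝ) ^ (-(v:ℤ)) ≤ (p:ℝ) ^ (v:ℤ) * (p:ℝ) ^ (-(v:ℤ)) := by
          apply mul_le_mul_of_nonneg_right (by rw [← hva]; exact hmaxv 1 0) (by positivity)
      _ = 1 := by rw [← zpow_add₀ (ne_of_gt hp0), add_neg_cancel, zpow_zero]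
  · show ‖(c * τ + d) * π⁻¹ ^ v‖ ≤ 1
    rw [norm_mul, hnπiv]
    calc ‖c * τ + d‖ * (p:ℝ) ^ (v:ℤ) ≤ (p:ℝ) ^ (-(v:ℤ)) * (p:ℝ) ^ (v:ℤ) :=
          mul_le_mul_of_nonneg_right key2 (by positivity)
      _ = 1 := by rw [← zpow_add₀ (ne_of_gt hp0), neg_add_cancel, zpow_zero]

noncomputable def SZ : SL(2, ZInvP p) := ⟨!![0, -1; 1, 0], by simp [Matrix.det_fin_two_of]⟩

noncomputable def SQ : SL(2, ℚ_[p]) := ⟨!![0, -1; 1, 0], by simp [Matrix.det_fin_two_of]⟩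

lemma SQ_mem : SQ p ∈ Kgrp p := by
  rw [mem_Kgrp_iff]
  intro i j
  fin_cases i <;> fin_cases j <;> simp [SQ]

lemma hSZQ : Matrix.SpecialLinearGroup.map (zInvPToQp p) (SZ p) = SQ p := by
  apply Subtype.ext
  ext i j
  fin_cases i <;> fin_cases j <;> rw [Matrix.SpecialLinearGroup.map_apply_coe] <;>
    simp [SZ, SQ, Matrix.SpecialLinearGroup.map_apply_coe, _root_.map_one, map_neg, map_zero]

lemma coe_mul_entry (A C : SL(2, ℚ_[p])) (i j : Fin 2) :
    (A * C) i j = A i 0 * C 0 j + A i 1 * C 1 j := by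
  show ((A : Matrix (Fin 2) (Fin 2) ℚ_[p]) * (C : Matrix (Fin 2) (Fin 2) ℚ_[p])) i j = _
  rw [Matrix.mul_apply, Fin.sum_univ_two]

lemma mul_SQ_right_c0 (A : SL(2, ℚ_[p])) (i : Fin 2) : (A * SQ p) i 0 = A i 1 := by
  rw [coe_mul_entry]; simp [SQ]

lemma mul_SQ_right_c1 (A : SL(2, ℚ_[p])) (i : Fin 2) : (A * SQ p) i 1 = -(A i 0) := by
  rw [coe_mul_entry]; simp [SQ]

lemma mul_SQ_left_r0 (A : SL(2, ℚ_[p])) (j : Fin 2) : (SQ p * A) 0 j = -(A 1 j) := by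
  rw [coe_mul_entry]; simp [SQ]

lemma mul_SQ_left_r1 (A : SL(2, ℚ_[p])) (j : Fin 2) : (SQ p * A) 1 j = A 0 j := by
  rw [coe_mul_entry]; simp [SQ]

lemma step_right (B : SL(2, ℚ_[p])) (N : SL(2, ZInvP p))
    (h : ∃ M, (B * Matrix.SpecialLinearGroup.map (zInvPToQp p) N) *
      Matrix.SpecialLinearGroup.map (zInvPToQp p) M ∈ Kgrp p) :
    ∃ M, B * Matrix.SpecialLinearGroup.map (zInvPToQp p) M ∈ Kgrp p := by
  obtain ⟨M, hM⟩ := h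
  exact ⟨N * M, by rwa [_root_.map_mul, ← mul_assoc]⟩

lemma step_left (C : SL(2, ℚ_[p])) (hC : C ∈ Kgrp p) (B : SL(2, ℚ_[p]))
    (h : ∃ M, (C * B) * Matrix.SpecialLinearGroup.map (zInvPToQp p) M ∈ Kgrp p) :
    ∃ M, B * Matrix.SpecialLinearGroup.map (zInvPToQp p) M ∈ Kgrp p := by
  obtain ⟨M, hM⟩ := h
  refine ⟨M, ?_⟩
  have h2 := (Kgrp p).mul_mem ((Kgrp p).inv_mem hC) hM
  have e : C⁻¹ * (C * B * Matrix.SpecialLinearGroup.map (zInvPToQp p) M)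
      = B * Matrix.SpecialLinearGroup.map (zInvPToQp p) M := by group
  rwa [e] at h2

set_option maxHeartbeats 1000000 in
lemma decomp (B : SL(2, ℚ_[p])) :
    ∃ M, B * Matrix.SpecialLinearGroup.map (zInvPToQp p) M ∈ Kgrp p := by
  obtain ⟨q, hq⟩ := Finite.exists_max (fun q : Fin 2 × Fin 2 => ‖B q.1 q.2‖)
  have hq4 : q = (0,0) ∨ q = (0,1) ∨ q = (1,0) ∨ q = (1,1) := by
    rcases q with ⟨i, j⟩
    fin_cases i <;> fin_cases j <;> simp
  rcases hq4 with rfl | rfl | rfl | rfl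
  · exact core p B (fun i j => hq (i, j))
  · have hmax : ∀ i j, ‖B i j‖ ≤ ‖B 0 1‖ := fun i j => hq (i, j)
    refine step_right p B (SZ p) ?_
    rw [hSZQ]
    refine core p (B * SQ p) ?_
    intro i j
    fin_cases i <;> fin_cases j <;>
      simp only [Fin.zero_eta, Fin.mk_one, mul_SQ_right_c0, mul_SQ_right_c1, norm_neg] <;>
      exact hmax _ _
  · have hmax : ∀ i j, ‖B i j‖ ≤ ‖B 1 0‖ := fun i j => hq (i, j)
    refine step_left p (SQ p) (SQ_mem p) B ?_
    refine core p (SQ p * B) ?_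
    intro i j
    fin_cases i <;> fin_cases j <;>
      simp only [Fin.zero_eta, Fin.mk_one, mul_SQ_left_r0, mul_SQ_left_r1, norm_neg] <;>
      exact hmax _ _
  · have hmax : ∀ i j, ‖B i j‖ ≤ ‖B 1 1‖ := fun i j => hq (i, j)
    refine step_left p (SQ p) (SQ_mem p) B ?_
    refine step_right p (SQ p * B) (SZ p) ?_
    rw [hSZQ]
    refine core p (SQ p * B * SQ p) ?_
    intro i j
    fin_cases i <;> fin_cases j <;>
      simp only [Fin.zero_eta, Fin.mk_one, mul_SQ_right_c0, mul_SQ_right_c1, mul_SQ_left_r0,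
        mul_SQ_left_r1, norm_neg] <;>
      exact hmax _ _

lemma mapR_int (Z : SL(2, ℤ)) :
    Matrix.SpecialLinearGroup.map (zInvPToR p)
      (Matrix.SpecialLinearGroup.map (Int.castRingHom (ZInvP p)) Z)
    = Matrix.SpecialLinearGroup.map (Int.castRingHom ℝ) Z := by
  apply Subtype.ext
  ext i j
  show ((zInvPToR p).comp (Int.castRingHom (ZInvP p))) (Z i j) = (Int.castRingHom ℝ) (Z i j)
  rw [eq_intCast, eq_intCast]

lemma mapQp_int (Z : SL(2, ℤ)) :
    Matrix.SpecialLinearGroup.map (zInvPToQp p)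
      (Matrix.SpecialLinearGroup.map (Int.castRingHom (ZInvP p)) Z)
    = Matrix.SpecialLinearGroup.map (PadicInt.Coe.ringHom (p := p))
      (Matrix.SpecialLinearGroup.map (Int.castRingHom ℤ_[p]) Z) := by
  apply Subtype.ext
  ext i j
  show ((zInvPToQp p).comp (Int.castRingHom (ZInvP p))) (Z i j)
      = ((PadicInt.Coe.ringHom (p := p)).comp (Int.castRingHom ℤ_[p])) (Z i j)
  rw [eq_intCast, eq_intCast]

lemma welldef (g h : GP p) (hrel : ∃ N, iotaP p N = g⁻¹ * h)
    (M M' : SL(2, ZInvP p))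
    (hM : g.2 * Matrix.SpecialLinearGroup.map (zInvPToQp p) M ∈ Kgrp p)
    (hM' : h.2 * Matrix.SpecialLinearGroup.map (zInvPToQp p) M' ∈ Kgrp p) :
    (QuotientGroup.mk (g.1 * Matrix.SpecialLinearGroup.map (zInvPToR p) M) :
        SL(2, ℝ) ⧸ SL2ZinR)
      = QuotientGroup.mk (h.1 * Matrix.SpecialLinearGroup.map (zInvPToR p) M') := by
  obtain ⟨N, hN⟩ := hrel
  have hh : h = g * iotaP p N := by rw [hN]; group
  have h1 : h.1 = g.1 * Matrix.SpecialLinearGroup.map (zInvPToR p) N := by rw [hh]; rfl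
  have h2 : h.2 = g.2 * Matrix.SpecialLinearGroup.map (zInvPToQp p) N := by rw [hh]; rfl
  set P := M⁻¹ * (N * M') with hPdef
  have hP : Matrix.SpecialLinearGroup.map (zInvPToQp p) P ∈ Kgrp p := by
    have key2 : Matrix.SpecialLinearGroup.map (zInvPToQp p) P
        = (g.2 * Matrix.SpecialLinearGroup.map (zInvPToQp p) M)⁻¹ *
          (h.2 * Matrix.SpecialLinearGroup.map (zInvPToQp p) M') := by
      rw [h2, hPdef]
      simp only [_root_.map_mul, map_inv]
      group
    rw [key2]
    exact (Kgrp p).mul_mem ((Kgrp p).inv_mem hM) hM'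
  obtain ⟨Z, hZ⟩ := exists_int_entries p P hP
  rw [QuotientGroup.eq]
  refine ⟨Z, ?_⟩
  rw [← mapR_int p Z, hZ, h1, hPdef]
  simp only [_root_.map_mul, map_inv]
  group

noncomputable def chooseM (B : SL(2, ℚ_[p])) : SL(2, ZInvP p) := (decomp p B).choose

lemma chooseM_spec (B : SL(2, ℚ_[p])) :
    B * Matrix.SpecialLinearGroup.map (zInvPToQp p) (chooseM p B) ∈ Kgrp p :=
  (decomp p B).choose_spec

noncomputable def fAux (g : GP p) : SL(2, ℝ) ⧸ SL2ZinR :=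
  QuotientGroup.mk (g.1 * Matrix.SpecialLinearGroup.map (zInvPToR p) (chooseM p g.2))

noncomputable def fP : XP p → SL(2, ℝ) ⧸ SL2ZinR :=
  Quotient.lift (fAux p) (by
    intro g h hgh
    have hrel : g⁻¹ * h ∈ GammaP p := (QuotientGroup.leftRel_apply).mp hgh
    exact welldef p g h hrel (chooseM p g.2) (chooseM p h.2)
      (chooseM_spec p g.2) (chooseM_spec p h.2))

lemma fP_mk (g : GP p) (M : SL(2, ZInvP p))
    (hM : g.2 * Matrix.SpecialLinearGroup.map (zInvPToQp p) M ∈ Kgrp p) :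
    fP p (QuotientGroup.mk g)
      = QuotientGroup.mk (g.1 * Matrix.SpecialLinearGroup.map (zInvPToR p) M) := by
  have h0 : fP p (QuotientGroup.mk g) = fAux p g := rfl
  rw [h0]
  exact welldef p g g ⟨1, by rw [_root_.map_one]; group⟩ (chooseM p g.2) M
    (chooseM_spec p g.2) hM

lemma fP_prop (A : SL(2, ℝ)) (B : SL(2, ℤ_[p])) :
    fP p (QuotientGroup.mk
        ((A, Matrix.SpecialLinearGroup.map (PadicInt.Coe.ringHom) B) : GP p))
      = QuotientGroup.mk A := by
  have hmem : ((A, Matrix.SpecialLinearGroup.map (PadicInt.Coe.ringHom) B) : GP p).2 *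
      Matrix.SpecialLinearGroup.map (zInvPToQp p) 1 ∈ Kgrp p := by
    rw [_root_.map_one, mul_one]
    exact ⟨B, rfl⟩
  rw [fP_mk p _ 1 hmem, _root_.map_one, mul_one]

lemma continuous_coe_SLR : Continuous (fun A : SL(2, ℝ) => (A : Matrix (Fin 2) (Fin 2) ℝ)) :=
  continuous_induced_dom

lemma continuous_mulright (C : SL(2, ℝ)) : Continuous fun A : SL(2, ℝ) => A * C := by
  apply continuous_induced_rng.2
  exact (continuous_induced_dom : Continuous (fun A : SL(2, ℝ) => (A : Matrix (Fin 2) (Fin 2) ℝ))).matrix_mul continuous_const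

lemma continuous_mulQright (C : SL(2, ℚ_[p])) : Continuous fun B : SL(2, ℚ_[p]) => B * C := by
  apply continuous_induced_rng.2
  exact (continuous_induced_dom : Continuous (fun A : SL(2, ℚ_[p]) => (A : Matrix (Fin 2) (Fin 2) ℚ_[p]))).matrix_mul continuous_const

lemma continuous_mZp : Continuous fun k : SL(2, ℤ_[p]) =>
    Matrix.SpecialLinearGroup.map (PadicInt.Coe.ringHom (p := p)) k := by
  apply continuous_induced_rng.2
  exact Continuous.matrix_map
    (continuous_induced_dom : Continuous (fun A : SL(2, ℤ_[p]) => (A : Matrix (Fin 2) (Fin 2) ℤ_[p])))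
    continuous_subtype_val

lemma isOpen_Kset : IsOpen {B : SL(2, ℚ_[p]) | B ∈ Kgrp p} := by
  have heq : {B : SL(2, ℚ_[p]) | B ∈ Kgrp p}
      = ⋂ (i : Fin 2), ⋂ (j : Fin 2), {B : SL(2, ℚ_[p]) | ‖B i j‖ < (p : ℝ)} := by
    ext B
    simp only [Set.mem_setOf_eq, Set.mem_iInter, mem_Kgrp_iff]
    constructor
    · intro h i j
      refine lt_of_le_of_lt (h i j) ?_
      exact_mod_cast (Fact.out : p.Prime).one_lt
    · intro h i j
      have h2 := Padic.norm_le_pow_iff_norm_lt_pow_add_one (B i j) 0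
      rw [zpow_zero, zero_add, zpow_one] at h2
      exact h2.2 (h i j)
  rw [heq]
  refine isOpen_iInter_of_finite fun i => isOpen_iInter_of_finite fun j => ?_
  have hcont : Continuous fun B : SL(2, ℚ_[p]) => ‖B i j‖ :=
    ((continuous_induced_dom : Continuous (fun A : SL(2, ℚ_[p]) => (A : Matrix (Fin 2) (Fin 2) ℚ_[p]))).matrix_elem i j).norm
  exact isOpen_lt hcont continuous_const

instance : CompactSpace SL(2, ℤ_[p]) := by
  haveI : CompactSpace (Matrix (Fin 2) (Fin 2) ℤ_[p]) :=
    (by infer_instance : CompactSpace (Fin 2 → Fin 2 → ℤ_[p]))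
  have hclosed : IsClosed {A : Matrix (Fin 2) (Fin 2) ℤ_[p] | A.det = 1} :=
    isClosed_eq (continuous_id.matrix_det) continuous_const
  have hcomp : IsCompact {A : Matrix (Fin 2) (Fin 2) ℤ_[p] | A.det = 1} := hclosed.isCompact
  exact isCompact_iff_compactSpace.mp hcomp

lemma continuous_fP : Continuous (fP p) := by
  refine (isQuotientMap_quotient_mk' (s := QuotientGroup.leftRel (GammaP p))).continuous_iff.mpr ?_
  rw [continuous_iff_continuousAt]
  intro g₀
  set M₀ := chooseM p g₀.2 with hM₀
  have hU : IsOpen {g : GP p | g.2 * Matrix.SpecialLinearGroup.map (zInvPToQp p) M₀ ∈ Kgrp p} := by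
    have : Continuous fun g : GP p => g.2 * Matrix.SpecialLinearGroup.map (zInvPToQp p) M₀ :=
      (continuous_mulQright p _).comp continuous_snd
    exact (isOpen_Kset p).preimage this
  have hg₀ : g₀ ∈ {g : GP p | g.2 * Matrix.SpecialLinearGroup.map (zInvPToQp p) M₀ ∈ Kgrp p} :=
    chooseM_spec p g₀.2
  have hcont : Continuous fun g : GP p =>
      (QuotientGroup.mk (g.1 * Matrix.SpecialLinearGroup.map (zInvPToR p) M₀) :
        SL(2, ℝ) ⧸ SL2ZinR) :=
    continuous_quotient_mk'.comp ((continuous_mulright _).comp continuous_fst)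
  refine ContinuousAt.congr hcont.continuousAt ?_
  refine Filter.eventuallyEq_of_mem (hU.mem_nhds hg₀) ?_
  intro g hg
  exact (fP_mk p g M₀ hg).symm

lemma fiber_eq (A₀ : SL(2, ℝ)) :
    fP p ⁻¹' {QuotientGroup.mk A₀} = Set.range (fun k : SL(2, ℤ_[p]) =>
      (QuotientGroup.mk ((A₀, Matrix.SpecialLinearGroup.map (PadicInt.Coe.ringHom) k) : GP p) :
        XP p)) := by
  ext x
  simp only [Set.mem_preimage, Set.mem_singleton_iff, Set.mem_range]
  constructor
  · intro hx
    obtain ⟨g, rfl⟩ := QuotientGroup.mk_surjective x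
    set M := chooseM p g.2 with hMdef
    obtain ⟨k, hk⟩ := chooseM_spec p g.2
    have hfx : (QuotientGroup.mk (g.1 * Matrix.SpecialLinearGroup.map (zInvPToR p) M) :
        SL(2, ℝ) ⧸ SL2ZinR) = QuotientGroup.mk A₀ := by
      rw [← fP_mk p g M (chooseM_spec p g.2)]
      exact hx
    rw [QuotientGroup.eq] at hfx
    obtain ⟨Z, hZ⟩ := hfx
    refine ⟨k * Matrix.SpecialLinearGroup.map (Int.castRingHom ℤ_[p]) Z, ?_⟩
    set N : SL(2, ZInvP p) := M * Matrix.SpecialLinearGroup.map (Int.castRingHom (ZInvP p)) Z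
      with hNdef
    have hmk : (QuotientGroup.mk (g * iotaP p N) : XP p) = QuotientGroup.mk g :=
      QuotientGroup.mk_mul_of_mem g ⟨N, rfl⟩
    have hc1 : (g * iotaP p N).1 = A₀ := by
      show g.1 * Matrix.SpecialLinearGroup.map (zInvPToR p) N = A₀
      rw [hNdef, _root_.map_mul, mapR_int, hZ]
      group
    have hc2 : (g * iotaP p N).2 = Matrix.SpecialLinearGroup.map PadicInt.Coe.ringHom
        (k * Matrix.SpecialLinearGroup.map (Int.castRingHom ℤ_[p]) Z) := by
      show g.2 * Matrix.SpecialLinearGroup.map (zInvPToQp p) N = _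
      rw [hNdef, _root_.map_mul, mapQp_int,
        _root_.map_mul (Matrix.SpecialLinearGroup.map (PadicInt.Coe.ringHom (p := p))),
        ← mul_assoc, hk]
    have hpair : ((A₀, Matrix.SpecialLinearGroup.map PadicInt.Coe.ringHom
        (k * Matrix.SpecialLinearGroup.map (Int.castRingHom ℤ_[p]) Z)) : GP p)
        = g * iotaP p N := (Prod.ext hc1 hc2).symm
    rw [hpair, hmk]
  · rintro ⟨k, rfl⟩
    exact fP_prop p A₀ k

lemma fiber_compact (y : SL(2, ℝ) ⧸ SL2ZinR) : IsCompact (fP p ⁻¹' {y}) := by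
  obtain ⟨A₀, rfl⟩ := QuotientGroup.mk_surjective y
  rw [fiber_eq]
  apply isCompact_range
  exact continuous_quotient_mk'.comp (continuous_const.prodMk (continuous_mZp p))

end Lemmas

/-- The projection `SL(2,ℝ) × SL(2,ℤ_p) → SL(2,ℝ)` induces a well-defined continuous
surjection `X = G/Γ → SL(2,ℝ)/SL(2,ℤ)` (sending the coset of `(A,B)` with
`B ∈ SL(2,ℤ_p)` to `A·SL(2,ℤ)`) which has compact fibers. -/
theorem exists_projection_to_SL2R_mod_SL2Z (p : ℕ) [Fact p.Prime] :
    ∃ f : XP p → SL(2, ℝ) ⧸ SL2ZinR,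
      (∀ (A : SL(2, ℝ)) (B : SL(2, ℤ_[p])),
        f (QuotientGroup.mk
            ((A, Matrix.SpecialLinearGroup.map (PadicInt.Coe.ringHom) B) : GP p)) =
          QuotientGroup.mk A) ∧
      Continuous f ∧ Function.Surjective f ∧ ∀ y, IsCompact (f ⁻¹' {y}) := by
  refine ⟨fP p, fP_prop p, continuous_fP p, ?_, fun y => fiber_compact p y⟩
  intro y
  obtain ⟨A, rfl⟩ := QuotientGroup.mk_surjective y
  exact ⟨QuotientGroup.mk
    ((A, Matrix.SpecialLinearGroup.map (PadicInt.Coe.ringHom) (1 : SL(2, ℤ_[p]))) : GP p),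
    fP_prop p A 1⟩
end
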